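/- arXiv:1904.08904 — 6 statements merged into one kernel-verified Lean document; each statement's English description precedes it below -/
import Mathlib

section
/- Let λ be a partition with at most r parts, each of size at most c, and let (a,b) ∉ [λ] be a box such that [λ] ∪ {(a,b)} is the Young diagram of a partition λ'. Let R = {h_{(a,j)}(λ) : 1 ≤ j < b} be the hook lengths of λ in row a west of (a,b) and R' = {h_{(i,b)}(λ') : a < i ≤ r} be the hook lengths of λ' (complementary hooks, for boxes outside [λ']) in column b south of (a,b). Then R and R' are disjoint and R ∪ R' = {1, 2, …, r − a + b − 1}. -/
/-!
Everything in row `a` and column `b` is governed by the rows `μ = (l (a + 1), …, l r)` below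
row `a`, a partition of width at most `l a = b - 1`. The hook of `(a, j)` is `(b - j) + μ'_j`,
where `μ'_j` is the length of column `j` of `μ`, and after adding `(a, b)` the complementary hook
of `(i, b)` is `(b - μ_i) + (i - a)`. Since `j ≤ μ_i` exactly when `μ'_j ≥ i - a`, the first value
is larger than the second in that case and smaller otherwise, so the two families never meet.
The first family is strictly decreasing in `j`, the second strictly increasing in `i`, and all
values lie in `{1, …, r - a + b - 1}`, which has exactly `(b - 1) + (r - a)` elements.
-/

/-- The boxes of the `r × c` rectangle `D`, with 1-based matrix coordinates
`(i, j)`, `1 ≤ i ≤ r`, `1 ≤ j ≤ c`. -/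
def rect (r c : ℕ) : Finset (ℕ × ℕ) := Finset.Icc 1 r ×ˢ Finset.Icc 1 c

/-- The boxes of the Young diagram `[λ]` of the partition whose `i`-th part is
`l i`, viewed inside the `r × c` rectangle. -/
def cells (l : ℕ → ℕ) (r c : ℕ) : Finset (ℕ × ℕ) :=
  (rect r c).filter (fun p => p.2 ≤ l p.1)

/-- The boxes of `D \ [λ]`. -/
def ocells (l : ℕ → ℕ) (r c : ℕ) : Finset (ℕ × ℕ) :=
  (rect r c).filter (fun p => l p.1 < p.2)

/-- The hook length of a box `(i, j) ∈ [λ]`: the box itself, the boxes of `[λ]`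
east of it in row `i` (there are `l i - j` of them), and the boxes of `[λ]`
south of it in column `j`. -/
def hin (l : ℕ → ℕ) (r i j : ℕ) : ℕ :=
  1 + (l i - j) + ((Finset.Icc (i + 1) r).filter (fun i' => j ≤ l i')).card

/-- The (complementary) hook length of a box `(i, j) ∈ D \ [λ]`: the box itself,
the boxes of `D \ [λ]` west of it in row `i`, and the boxes of `D \ [λ]` north
of it in column `j`. -/
def hout (l : ℕ → ℕ) (i j : ℕ) : ℕ :=
  1 + ((Finset.Icc 1 (j - 1)).filter (fun j' => l i < j')).card
    + ((Finset.Icc 1 (i - 1)).filter (fun i' => l i' < j)).card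

/-- The distance of a box `(i, j) ∈ [λ]`: the number of boxes in any monotone
walk by steps south and west from `(i, j)` to `(r, 1)`, inclusive. -/
def dIn (r i j : ℕ) : ℕ := (r - i) + (j - 1) + 1

/-- The distance of a box `(i, j) ∈ D \ [λ]`: the number of boxes in any
monotone walk by steps north and east from `(i, j)` to `(1, c)`, inclusive. -/
def dOut (c i j : ℕ) : ℕ := (i - 1) + (c - j) + 1

def colLength (f : ℕ → ℕ) (a r j : ℕ) : ℕ :=
  ((Finset.Icc (a + 1) r).filter (fun i => j ≤ f i)).card

def rowHook (f : ℕ → ℕ) (a r n j : ℕ) : ℕ := n - j + 1 + colLength f a r j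

def colHook (f : ℕ → ℕ) (a n i : ℕ) : ℕ := n - f i + (i - a)

section

variable {f : ℕ → ℕ} {a r : ℕ}

lemma colLength_antitone : Antitone (colLength f a r) := fun _ _ hj =>
  Finset.card_le_card (Finset.monotone_filter_right _ fun _ _ hi => hj.trans hi)

lemma colLength_le_sub (j : ℕ) : colLength f a r j ≤ r - a := by
  simpa [colLength] using Finset.card_filter_le (Finset.Icc (a + 1) r) (fun i => j ≤ f i)

lemma sub_le_colLength (hf : AntitoneOn f (Set.Icc (a + 1) r)) {i j : ℕ}
    (hi : i ∈ Finset.Icc (a + 1) r) (hj : j ≤ f i) : i - a ≤ colLength f a r j := by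
  rw [Finset.mem_Icc] at hi
  have hsub : Finset.Icc (a + 1) i ⊆ (Finset.Icc (a + 1) r).filter (fun i' => j ≤ f i') := by
    intro i' hi'
    rw [Finset.mem_Icc] at hi'
    rw [Finset.mem_filter, Finset.mem_Icc]
    exact ⟨⟨hi'.1, hi'.2.trans hi.2⟩,
      hj.trans (hf ⟨hi'.1, hi'.2.trans hi.2⟩ ⟨hi.1, hi.2⟩ hi'.2)⟩
  simpa [colLength] using Finset.card_le_card hsub

lemma colLength_lt_sub (hf : AntitoneOn f (Set.Icc (a + 1) r)) {i j : ℕ}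
    (hi : i ∈ Finset.Icc (a + 1) r) (hj : f i < j) : colLength f a r j < i - a := by
  rw [Finset.mem_Icc] at hi
  have hsub : (Finset.Icc (a + 1) r).filter (fun i' => j ≤ f i') ⊆ Finset.Icc (a + 1) (i - 1) := by
    intro i' hi'
    rw [Finset.mem_filter, Finset.mem_Icc] at hi'
    rw [Finset.mem_Icc]
    refine ⟨hi'.1.1, ?_⟩
    by_contra! hlt
    have := hf ⟨hi.1, hi.2⟩ hi'.1 (by omega)
    omega
  have := Finset.card_le_card hsub
  simp only [Nat.card_Icc] at this
  exact lt_of_le_of_lt this (by omega)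

variable {n : ℕ}

lemma strictAntiOn_rowHook : StrictAntiOn (rowHook f a r n) (Set.Iic n) := by
  intro j hj j' hj' hjj'
  have := colLength_antitone (f := f) (a := a) (r := r) hjj'.le
  simp only [Set.mem_Iic] at hj hj'
  unfold rowHook
  omega

lemma strictMonoOn_colHook (hf : AntitoneOn f (Set.Icc (a + 1) r))
    (hfn : ∀ i ∈ Finset.Icc (a + 1) r, f i ≤ n) :
    StrictMonoOn (colHook f a n) (Set.Icc (a + 1) r) := by
  intro i hi i' hi' hii'
  have := hf hi hi' hii'.le
  have := hfn i (Finset.mem_Icc.mpr hi)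
  simp only [Set.mem_Icc] at hi hi'
  unfold colHook
  omega

lemma disjoint_image_rowHook_colHook (hf : AntitoneOn f (Set.Icc (a + 1) r)) :
    Disjoint ((Finset.Icc 1 n).image (rowHook f a r n))
      ((Finset.Icc (a + 1) r).image (colHook f a n)) := by
  rw [Finset.disjoint_left]
  rintro _ hrow hcol
  obtain ⟨j, hj, rfl⟩ := Finset.mem_image.mp hrow
  obtain ⟨i, hi, heq⟩ := Finset.mem_image.mp hcol
  have hi' := Finset.mem_Icc.mp hi
  have hj' := Finset.mem_Icc.mp hj
  unfold rowHook colHook at heq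
  rcases le_or_gt j (f i) with hji | hij
  · have := sub_le_colLength hf hi hji
    omega
  · have := colLength_lt_sub hf hi hij
    omega

/-- Macdonald, *Symmetric functions and Hall polynomials*, (I.1.7), up to the reflection
`x ↦ r - a + n + 1 - x`. -/
theorem disjoint_and_union_image_rowHook_colHook (hf : AntitoneOn f (Set.Icc (a + 1) r))
    (hfn : ∀ i ∈ Finset.Icc (a + 1) r, f i ≤ n) :
    Disjoint ((Finset.Icc 1 n).image (rowHook f a r n))
        ((Finset.Icc (a + 1) r).image (colHook f a n)) ∧
      (Finset.Icc 1 n).image (rowHook f a r n) ∪ (Finset.Icc (a + 1) r).image (colHook f a n) =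
        Finset.Icc 1 (r - a + n) := by
  have hdisj := disjoint_image_rowHook_colHook (n := n) hf
  refine ⟨hdisj, Finset.eq_of_subset_of_card_le ?_ ?_⟩
  · intro x hx
    rw [Finset.mem_Icc]
    rcases Finset.mem_union.mp hx with hx | hx
    · obtain ⟨j, hj, rfl⟩ := Finset.mem_image.mp hx
      have := colLength_le_sub (f := f) (a := a) (r := r) j
      have := Finset.mem_Icc.mp hj
      unfold rowHook
      omega
    · obtain ⟨i, hi, rfl⟩ := Finset.mem_image.mp hx
      have := Finset.mem_Icc.mp hi
      unfold colHook
      omega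
  · have hrow : ((Finset.Icc 1 n).image (rowHook f a r n)).card = n := by
      rw [Finset.card_image_of_injOn (strictAntiOn_rowHook.injOn.mono
        fun j hj => (Finset.mem_Icc.mp hj).2)]
      simp
    have hcol : ((Finset.Icc (a + 1) r).image (colHook f a n)).card = r - a := by
      rw [Finset.card_image_of_injOn (by simpa using (strictMonoOn_colHook hf hfn).injOn)]
      simp
    rw [Finset.card_union_of_disjoint hdisj, hrow, hcol, Nat.card_Icc]
    omega

end

/-- `hcorner` puts the boxes of column `b` above row `a` inside `λ`, so the north arm of `(i, b)`
in `D \ [λ']` consists of the rows `a + 1, …, i - 1`. -/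
lemma hout_update_of_addable {l : ℕ → ℕ} {a b i : ℕ} (hl : Antitone l) (hadd : l a + 1 = b)
    (hcorner : a = 1 ∨ b ≤ l (a - 1)) (hai : a < i) :
    hout (Function.update l a b) i b = colHook l a (b - 1) i := by
  have hia : i ≠ a := hai.ne'
  have hrow : (Finset.Icc 1 (b - 1)).filter (fun j => Function.update l a b i < j) =
      Finset.Icc (l i + 1) (b - 1) := by
    ext j
    simp only [Finset.mem_filter, Finset.mem_Icc, Function.update_of_ne hia]
    omega
  have hcol : (Finset.Icc 1 (i - 1)).filter (fun i' => Function.update l a b i' < b) =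
      Finset.Icc (a + 1) (i - 1) := by
    ext i'
    simp only [Finset.mem_filter, Finset.mem_Icc]
    rcases lt_trichotomy i' a with hlt | rfl | hgt
    · have := hl (show i' ≤ a - 1 by omega)
      rw [Function.update_of_ne hlt.ne]
      omega
    · simp
    · have := hl hgt.le
      rw [Function.update_of_ne hgt.ne']
      omega
  have := hl hai.le
  unfold hout colHook
  rw [hrow, hcol, Nat.card_Icc, Nat.card_Icc]
  omega

theorem row_column_complementary_hooks_row_general (r a b : ℕ) (l : ℕ → ℕ)
    (hA : ∀ i, l (i + 1) ≤ l i)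
    (hadd : l a + 1 = b) (hcorner : a = 1 ∨ b ≤ l (a - 1)) :
    Disjoint ((Finset.Icc 1 (b - 1)).image (fun j => hin l r a j))
        ((Finset.Icc (a + 1) r).image (fun i => hout (Function.update l a b) i b)) ∧
      (Finset.Icc 1 (b - 1)).image (fun j => hin l r a j) ∪
          (Finset.Icc (a + 1) r).image (fun i => hout (Function.update l a b) i b) =
        Finset.Icc 1 (r - a + b - 1) := by
  have hl : Antitone l := antitone_nat_of_succ_le hA
  have hwidth : ∀ i ∈ Finset.Icc (a + 1) r, l i ≤ b - 1 := fun i hi => by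
    have := hl (Nat.le_of_succ_le (Finset.mem_Icc.mp hi).1)
    omega
  have hrow : (Finset.Icc 1 (b - 1)).image (fun j => hin l r a j) =
      (Finset.Icc 1 (b - 1)).image (rowHook l a r (b - 1)) :=
    Finset.image_congr fun j _ => by unfold hin rowHook colLength; omega
  have hcol : (Finset.Icc (a + 1) r).image (fun i => hout (Function.update l a b) i b) =
      (Finset.Icc (a + 1) r).image (colHook l a (b - 1)) :=
    Finset.image_congr fun i hi =>
      hout_update_of_addable hl hadd hcorner (Finset.mem_Icc.mp (Finset.mem_coe.mp hi)).1
  rw [hrow, hcol, show r - a + b - 1 = r - a + (b - 1) by omega]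
  exact disjoint_and_union_image_rowHook_colHook (hl.antitoneOn _) hwidth

/-- **Lemma 2.1(i).** Let `λ` fit in the `r × c` rectangle, and let `(a, b)` be
an addable box of `λ`, so that `λ' = λ ∪ {(a,b)}` is a partition.  Let
`R = {h_{(a,j)}(λ) : 1 ≤ j < b}` (hook lengths of `λ` in row `a` west of
`(a,b)`) and `R' = {h_{(i,b)}(λ') : a < i ≤ r}` (complementary hook lengths of
`λ'` in column `b` south of `(a,b)`).  Then `R` and `R'` are disjoint and
`R ∪ R' = {1, …, r - a + b - 1}`. -/
theorem row_column_complementary_hooks_row (r c a b : ℕ) (l : ℕ → ℕ)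
    (hA : ∀ i, l (i + 1) ≤ l i) (hr : ∀ i, r < i → l i = 0) (hc : ∀ i, l i ≤ c)
    (ha1 : 1 ≤ a) (har : a ≤ r) (hb1 : 1 ≤ b) (hbc : b ≤ c)
    (hadd : l a + 1 = b) (hcorner : a = 1 ∨ b ≤ l (a - 1)) :
    Disjoint ((Finset.Icc 1 (b - 1)).image (fun j => hin l r a j))
        ((Finset.Icc (a + 1) r).image (fun i => hout (Function.update l a b) i b)) ∧
      (Finset.Icc 1 (b - 1)).image (fun j => hin l r a j) ∪
          (Finset.Icc (a + 1) r).image (fun i => hout (Function.update l a b) i b) =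
        Finset.Icc 1 (r - a + b - 1) :=
  row_column_complementary_hooks_row_general r a b l hA hadd hcorner
end

section
/- Let λ be a partition with at most r parts, each of size at most c, and let (a,b) ∉ [λ] be an addable box so that λ' = λ ∪ {(a,b)} is a partition. Let C = {h_{(i,b)}(λ) : 1 ≤ i < a} and C' = {h_{(a,j)}(λ') : b < j ≤ c}. Then C and C' are disjoint and C ∪ C' = {1, 2, …, c − b + a − 1}. -/
/-!
Write `N j` (`shortRowCount`) for the number of rows `i < a` of `λ` shorter than `j`. The hook
of `(i, b)` has length `λᵢ + a - b - i`, strictly decreasing in `i`, and the complementary hook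
of `(a, j)` in `λ'` has length `j - b + N j`, strictly increasing in `j`. The two never meet:
if `j ≤ λᵢ` then `N j ≤ a - 1 - i` puts the row value below the column value, and if `λᵢ < j`
then `N j ≥ a - i` puts it above. Both families lie in `{1, …, c - b + a - 1}`, and there are
`(a - 1) + (c - b)` values in all, so they fill it.
-/

open Finset

def shortRowCount (l : ℕ → ℕ) (a j : ℕ) : ℕ := #{i ∈ Icc 1 (a - 1) | l i < j}

section ShortRows

variable {l : ℕ → ℕ} {a : ℕ}

theorem shortRowCount_le (j : ℕ) : shortRowCount l a j ≤ a - 1 :=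
  (card_filter_le _ _).trans (by simp)

theorem shortRowCount_mono : Monotone (shortRowCount l a) := fun _ _ hjj' =>
  card_le_card (monotone_filter_right _ fun _ _ h => h.trans_le hjj')

theorem shortRowCount_le_of_le (hl : Antitone l) {i j : ℕ} (hj : j ≤ l i) :
    shortRowCount l a j ≤ a - 1 - i := by
  calc shortRowCount l a j ≤ #(Icc (i + 1) (a - 1)) := by
        refine card_le_card fun x hx => ?_
        simp only [mem_filter, mem_Icc] at hx ⊢
        refine ⟨Nat.lt_of_not_le fun hxi => ?_, hx.1.2⟩
        exact absurd (hj.trans (hl hxi)) (not_le.2 hx.2)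
    _ = a - 1 - i := by simp

theorem le_shortRowCount_of_lt (hl : Antitone l) {i j : ℕ} (hi : 0 < i) (hj : l i < j) :
    a - i ≤ shortRowCount l a j := by
  calc a - i = #(Icc i (a - 1)) := by rw [Nat.card_Icc]; omega
    _ ≤ shortRowCount l a j := by
        refine card_le_card fun x hx => ?_
        simp only [mem_filter, mem_Icc] at hx ⊢
        exact ⟨⟨by omega, hx.2⟩, (hl hx.1).trans_lt hj⟩

end ShortRows

section Hooks

variable {l : ℕ → ℕ} {r a b : ℕ}

theorem le_of_corner (hl : Antitone l) (hcorner : a = 1 ∨ b ≤ l (a - 1)) {i : ℕ} (hi : 0 < i)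
    (hia : i < a) : b ≤ l i := by
  rcases hcorner with rfl | h
  · omega
  · exact h.trans (hl (by omega))

theorem hin_add_eq {i : ℕ} (hl : Antitone l) (har : a ≤ r) (hla : l a < b)
    (hbl : ∀ i, 0 < i → i < a → b ≤ l i) (hi : 0 < i) (hia : i < a) :
    hin l r i b + b + i = l i + a := by
  have hsouth : {i' ∈ Icc (i + 1) r | b ≤ l i'} = Icc (i + 1) (a - 1) := by
    ext i'
    simp only [mem_filter, mem_Icc]
    constructor
    · rintro ⟨⟨hi', -⟩, hb⟩
      refine ⟨hi', Nat.le_sub_one_of_lt (Nat.lt_of_not_le fun hai' => ?_)⟩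
      exact absurd (hb.trans (hl hai')) (not_le.2 hla)
    · rintro ⟨hi', hia'⟩
      exact ⟨⟨hi', by omega⟩, hbl i' (by omega) (by omega)⟩
  have hb := hbl i hi hia
  unfold hin
  rw [hsouth, Nat.card_Icc]
  omega

theorem hout_update_self {j : ℕ} (hbj : b < j) :
    hout (Function.update l a b) a j = j - b + shortRowCount l a j := by
  have hwest : {j' ∈ Icc 1 (j - 1) | Function.update l a b a < j'} = Icc (b + 1) (j - 1) := by
    ext j'
    simp only [Function.update_self, mem_filter, mem_Icc]
    omega
  have hnorth : {i' ∈ Icc 1 (a - 1) | Function.update l a b i' < j} =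
      {i' ∈ Icc 1 (a - 1) | l i' < j} :=
    filter_congr fun i' hi' => by
      rw [Function.update_of_ne (by simp only [mem_Icc] at hi'; omega)]
  unfold hout shortRowCount
  rw [hwest, hnorth, Nat.card_Icc]
  omega

theorem hin_strictAntiOn (hl : Antitone l) (har : a ≤ r) (hla : l a < b)
    (hbl : ∀ i, 0 < i → i < a → b ≤ l i) :
    StrictAntiOn (fun i => hin l r i b) (Set.Icc 1 (a - 1)) := by
  intro i ⟨hi, hia⟩ i' ⟨hi', hia'⟩ hii'
  have e := hin_add_eq hl har hla hbl (i := i) (by omega) (by omega)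
  have e' := hin_add_eq hl har hla hbl (i := i') (by omega) (by omega)
  have := hl hii'.le
  simp only
  omega

theorem hout_update_self_strictMonoOn :
    StrictMonoOn (fun j => hout (Function.update l a b) a j) (Set.Ioi b) := by
  intro j (hj : b < j) j' (hj' : b < j') hjj'
  have := shortRowCount_mono (l := l) (a := a) hjj'.le
  simp only [hout_update_self hj, hout_update_self hj']
  omega

theorem hin_ne_hout_update_self (hl : Antitone l) (har : a ≤ r) (hla : l a < b)
    (hbl : ∀ i, 0 < i → i < a → b ≤ l i) {i j : ℕ} (hi : 0 < i) (hia : i < a) (hbj : b < j) :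
    hin l r i b ≠ hout (Function.update l a b) a j := by
  have e := hin_add_eq hl har hla hbl hi hia
  have hb := hbl i hi hia
  rw [hout_update_self hbj]
  rcases le_or_gt j (l i) with hj | hj
  · have := shortRowCount_le_of_le (a := a) hl hj
    omega
  · have := le_shortRowCount_of_lt (a := a) hl hi hj
    omega

end Hooks

theorem row_column_complementary_hooks_column_general (r c a b : ℕ) (l : ℕ → ℕ)
    (hA : ∀ i, l (i + 1) ≤ l i) (hc : ∀ i, l i ≤ c)
    (ha1 : 1 ≤ a) (har : a ≤ r)
    (hadd : l a + 1 = b) (hcorner : a = 1 ∨ b ≤ l (a - 1)) :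
    Disjoint ((Finset.Icc 1 (a - 1)).image (fun i => hin l r i b))
        ((Finset.Icc (b + 1) c).image (fun j => hout (Function.update l a b) a j)) ∧
      (Finset.Icc 1 (a - 1)).image (fun i => hin l r i b) ∪
          (Finset.Icc (b + 1) c).image (fun j => hout (Function.update l a b) a j) =
        Finset.Icc 1 (c - b + a - 1) := by
  have hl : Antitone l := antitone_nat_of_succ_le hA
  have hla : l a < b := by omega
  have hbl : ∀ i, 0 < i → i < a → b ≤ l i := fun _ => le_of_corner hl hcorner
  have hdisj : Disjoint ((Icc 1 (a - 1)).image fun i => hin l r i b)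
      ((Icc (b + 1) c).image fun j => hout (Function.update l a b) a j) := by
    simp only [disjoint_left, mem_image, mem_Icc]
    rintro _ ⟨i, ⟨hi, hia⟩, rfl⟩ ⟨j, ⟨hbj, -⟩, hij⟩
    exact hin_ne_hout_update_self hl har hla hbl (by omega) (by omega) (by omega) hij.symm
  refine ⟨hdisj, eq_of_subset_of_card_le (union_subset ?_ ?_) ?_⟩
  · refine image_subset_iff.2 fun i hi => ?_
    simp only [mem_Icc] at hi ⊢
    have := hin_add_eq hl har hla hbl (i := i) (by omega) (by omega)
    have := hbl i (by omega) (by omega)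
    have := hc i
    omega
  · refine image_subset_iff.2 fun j hj => ?_
    simp only [mem_Icc] at hj ⊢
    have := shortRowCount_le (l := l) (a := a) j
    rw [hout_update_self (by omega)]
    omega
  · have hinj : Set.InjOn (fun i => hin l r i b) (Icc 1 (a - 1)) := by
      rw [coe_Icc]
      exact (hin_strictAntiOn hl har hla hbl).injOn
    have hinj' : Set.InjOn (fun j => hout (Function.update l a b) a j) (Icc (b + 1) c) :=
      hout_update_self_strictMonoOn.injOn.mono fun _ hj => (mem_Icc.1 hj).1
    rw [card_union_of_disjoint hdisj, card_image_of_injOn hinj, card_image_of_injOn hinj',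
      Nat.card_Icc, Nat.card_Icc, Nat.card_Icc]
    omega

/-- **Lemma 2.1(ii).** Let `λ` fit in the `r × c` rectangle, and let `(a, b)` be
an addable box of `λ`, so that `λ' = λ ∪ {(a,b)}` is a partition.  Let
`C = {h_{(i,b)}(λ) : 1 ≤ i < a}` (hook lengths of `λ` in column `b` north of
`(a,b)`) and `C' = {h_{(a,j)}(λ') : b < j ≤ c}` (complementary hook lengths of
`λ'` in row `a` east of `(a,b)`).  Then `C` and `C'` are disjoint and
`C ∪ C' = {1, …, c - b + a - 1}`. -/
theorem row_column_complementary_hooks_column (r c a b : ℕ) (l : ℕ → ℕ)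
    (hA : ∀ i, l (i + 1) ≤ l i) (hr : ∀ i, r < i → l i = 0) (hc : ∀ i, l i ≤ c)
    (ha1 : 1 ≤ a) (har : a ≤ r) (hb1 : 1 ≤ b) (hbc : b ≤ c)
    (hadd : l a + 1 = b) (hcorner : a = 1 ∨ b ≤ l (a - 1)) :
    Disjoint ((Finset.Icc 1 (a - 1)).image (fun i => hin l r i b))
        ((Finset.Icc (b + 1) c).image (fun j => hout (Function.update l a b) a j)) ∧
      (Finset.Icc 1 (a - 1)).image (fun i => hin l r i b) ∪
          (Finset.Icc (b + 1) c).image (fun j => hout (Function.update l a b) a j) =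
        Finset.Icc 1 (c - b + a - 1) :=
  row_column_complementary_hooks_column_general r c a b l hA hc ha1 har hadd hcorner
end

section
/- Let λ be a partition with at most r rows and largest part at most c. There is a bijection from SSYT_r(λ) to SSYT_r(λ°) sending a tableau t to the tableau t° whose entries in column j are the complement in {1, …, r} of the entries of t in column c+1−j, arranged in increasing order. In particular |SSYT_r(λ)| = |SSYT_r(λ°)|. -/
/-!
A column of a semistandard tableau is strictly increasing, hence determined by its set of entries:
its `k`-th entry is `Nat.nth` of that set at `k - 1`. For adjacent column sets `A` (left) and `A'`
(right), the row condition follows from `Nat.count (· ∈ A') x ≤ Nat.count (· ∈ A) x` for every `x`.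
Complementing in `{1, …, r}` reverses these counting inequalities, and `t ↦ t°` also reverses the
order of the columns, so `t°` satisfies the row condition again; its columns are strictly
increasing by construction. Since `(λ°)° = λ` and complementing a column twice gives it back,
`t ↦ t°` is an involution, hence a bijection.
-/

/-- `t` is a semistandard Young tableau of shape `λ` (row lengths `l`) with
entries in `{1, …, r}`: rows weakly increase west to east, columns strictly
increase north to south, and `t` is `0` outside the diagram. -/
def IsSSYT (l : ℕ → ℕ) (r : ℕ) (t : ℕ → ℕ → ℕ) : Prop :=
  (∀ i j, 1 ≤ i → 1 ≤ j → j ≤ l i → 1 ≤ t i j ∧ t i j ≤ r) ∧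
  (∀ i j, 1 ≤ i → 1 ≤ j → j + 1 ≤ l i → t i j ≤ t i (j + 1)) ∧
  (∀ i j, 1 ≤ i → 1 ≤ j → j ≤ l (i + 1) → t i j < t (i + 1) j) ∧
  (∀ i j, ¬(1 ≤ i ∧ 1 ≤ j ∧ j ≤ l i) → t i j = 0)

/-- `|t|`, the sum of the entries of the tableau `t` of shape `l`
(with at most `r` rows). -/
def wt (l : ℕ → ℕ) (r : ℕ) (t : ℕ → ℕ → ℕ) : ℕ :=
  ∑ i ∈ Finset.Icc 1 r, ∑ j ∈ Finset.Icc 1 (l i), t i j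

/-- The complement `λ°` of `λ` in the `r × c` rectangle: the partition
`(c - λ_r, c - λ_{r-1}, …, c - λ_1)` (trailing zeroes being irrelevant). -/
def lcomp (l : ℕ → ℕ) (r c : ℕ) : ℕ → ℕ :=
  fun i => if i ≤ r then c - l (r + 1 - i) else 0

/-- The set of entries of column `j` of the tableau `t` of shape `l`. -/
def colEntries (l : ℕ → ℕ) (r : ℕ) (t : ℕ → ℕ → ℕ) (j : ℕ) : Finset ℕ :=
  ((Finset.Icc 1 r).filter (fun i => j ≤ l i)).image (fun i => t i j)

/-- King's column-complement map `t ↦ t°`: the entries of column `j` of `t°`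
are the complement in `{1, …, r}` of the entries of column `c + 1 - j` of `t`,
arranged in increasing order from north to south. -/
def complMap (l : ℕ → ℕ) (r c : ℕ) (t : ℕ → ℕ → ℕ) : ℕ → ℕ → ℕ :=
  fun i j =>
    if 1 ≤ i ∧ 1 ≤ j ∧ j ≤ lcomp l r c i then
      (Finset.sort (Finset.Icc 1 r \ colEntries l r t (c + 1 - j)) (· ≤ ·)).getD
        (i - 1) 0
    else 0

open Finset

lemma Finset.sort_getD_eq_nth (S : Finset ℕ) (k : ℕ) :
    (S.sort (· ≤ ·)).getD k 0 = Nat.nth (· ∈ S) k := by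
  have hS : (Set.ofPred (· ∈ S)).Finite := S.finite_toSet
  rw [Nat.nth_eq_getD_sort hS]
  congr
  ext
  simp

lemma Finset.card_toFinset_ofPred_mem (S : Finset ℕ) (hS : (Set.ofPred (· ∈ S)).Finite) :
    #hS.toFinset = #S := by
  congr
  ext
  simp

lemma Finset.nth_mem {S : Finset ℕ} {k : ℕ} (hk : k < #S) : Nat.nth (· ∈ S) k ∈ S :=
  Nat.nth_mem_of_lt_card S.finite_toSet (by rwa [S.card_toFinset_ofPred_mem])

lemma Finset.nth_lt_nth {S : Finset ℕ} {k m : ℕ} (hkm : k < m) (hm : m < #S) :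
    Nat.nth (· ∈ S) k < Nat.nth (· ∈ S) m :=
  Nat.nth_lt_nth_of_lt_card S.finite_toSet hkm (by rwa [S.card_toFinset_ofPred_mem])

lemma Finset.count_mem_eq_card_filter_lt (S : Finset ℕ) (x : ℕ) :
    Nat.count (· ∈ S) x = #{y ∈ S | y < x} := by
  rw [Nat.count_eq_card_filter_range]
  congr 1
  ext
  simp [and_comm]

lemma Finset.count_mem_sdiff {A B : Finset ℕ} (hAB : A ⊆ B) (x : ℕ) :
    Nat.count (· ∈ B \ A) x = Nat.count (· ∈ B) x - Nat.count (· ∈ A) x := by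
  have hfilter : {y ∈ B \ A | y < x} = {y ∈ B | y < x} \ {y ∈ A | y < x} := by
    ext
    simp only [mem_filter, mem_sdiff]
    tauto
  simp only [count_mem_eq_card_filter_lt]
  rw [hfilter, card_sdiff_of_subset (filter_subset_filter _ hAB)]

lemma Finset.count_mem_image {s : Finset ℕ} {f : ℕ → ℕ} (hf : Set.InjOn f s) (x : ℕ) :
    Nat.count (· ∈ s.image f) x = #{i ∈ s | f i < x} := by
  rw [count_mem_eq_card_filter_lt, filter_image, card_image_of_injOn (hf.mono (filter_subset _ s))]

lemma Nat.nth_le_nth_of_count_le {p q : ℕ → Prop} [DecidablePred p] [DecidablePred q]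
    (h : ∀ x, Nat.count q x ≤ Nat.count p x) {k : ℕ}
    (hk : ∀ hf : (Set.ofPred q).Finite, k < #hf.toFinset) : Nat.nth p k ≤ Nat.nth q k := by
  have hq : Nat.count q (Nat.nth q k + 1) = k + 1 := Nat.count_nth_succ hk
  have hp : k < Nat.count p (Nat.nth q k + 1) := by
    have := h (Nat.nth q k + 1)
    omega
  exact Nat.lt_add_one_iff.1 (Nat.nth_lt_of_lt_count hp)

section Shape

variable {l l' : ℕ → ℕ} {r c : ℕ}

def colRows (l : ℕ → ℕ) (r j : ℕ) : Finset ℕ := {i ∈ Icc 1 r | j ≤ l i}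

lemma mem_colRows {j i : ℕ} : i ∈ colRows l r j ↔ (1 ≤ i ∧ i ≤ r) ∧ j ≤ l i := by
  simp [colRows]

lemma colEntries_eq_image (l : ℕ → ℕ) (r : ℕ) (t : ℕ → ℕ → ℕ) (j : ℕ) :
    colEntries l r t j = (colRows l r j).image (t · j) :=
  rfl

lemma le_iff_le_card_colRows (hl : Antitone l) {i j : ℕ} (hi : 1 ≤ i) (hir : i ≤ r) :
    j ≤ l i ↔ i ≤ #(colRows l r j) := by
  constructor
  · intro hj
    have hsub : Icc 1 i ⊆ colRows l r j := fun i' hi' => by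
      rw [mem_Icc] at hi'
      exact mem_colRows.2 ⟨⟨hi'.1, hi'.2.trans hir⟩, hj.trans (hl hi'.2)⟩
    simpa using card_le_card hsub
  · intro hcard
    by_contra! hlt
    have hsub : colRows l r j ⊆ Icc 1 (i - 1) := fun i' hi' => by
      obtain ⟨⟨hi'1, -⟩, hj⟩ := mem_colRows.1 hi'
      have : i' < i := lt_of_not_ge fun hii' => (hj.trans (hl hii')).not_gt hlt
      exact mem_Icc.2 ⟨hi'1, by omega⟩
    have := card_le_card hsub
    simp only [Nat.card_Icc] at this
    omega

lemma card_colRows_le (l : ℕ → ℕ) (r j : ℕ) : #(colRows l r j) ≤ r := by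
  unfold colRows
  simpa using card_filter_le (Icc 1 r) (j ≤ l ·)

lemma colRows_congr (h : Set.EqOn l l' (Set.Ici 1)) (j : ℕ) : colRows l r j = colRows l' r j :=
  filter_congr fun i hi => by rw [h (mem_Icc.1 hi).1]

lemma lcomp_le (l : ℕ → ℕ) (r c i : ℕ) : lcomp l r c i ≤ c := by
  unfold lcomp
  split <;> omega

lemma lcomp_eq_zero {i : ℕ} (hi : r < i) : lcomp l r c i = 0 :=
  if_neg (by omega)

lemma lcomp_antitone (hl : Antitone l) : Antitone (lcomp l r c) := by
  refine antitone_nat_of_succ_le fun i => ?_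
  unfold lcomp
  split_ifs with h₁ h₂ h₂
  · exact Nat.sub_le_sub_left (hl (by omega)) c
  · omega
  · omega
  · rfl

-- Only on `i ≥ 1`: row `0` lies outside every diagram and `lcomp` does not preserve `l 0`.
lemma lcomp_lcomp (hr : ∀ i, r < i → l i = 0) (hc : ∀ i, l i ≤ c) :
    Set.EqOn (lcomp (lcomp l r c) r c) l (Set.Ici 1) := by
  intro i (hi : 1 ≤ i)
  unfold lcomp
  by_cases hir : i ≤ r
  · rw [if_pos hir, if_pos (by omega), show r + 1 - (r + 1 - i) = i by omega]
    have := hc i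
    omega
  · rw [if_neg hir, hr i (by omega)]

lemma lcomp_congr (h : Set.EqOn l l' (Set.Ici 1)) : lcomp l r c = lcomp l' r c := by
  funext i
  unfold lcomp
  split_ifs
  · rw [h (show 1 ≤ r + 1 - i by omega)]
  · rfl

lemma colRows_lcomp (hl : Antitone l) {j : ℕ} (hj : 1 ≤ j) (hjc : j ≤ c) :
    colRows (lcomp l r c) r j = Icc 1 (r - #(colRows l r (c + 1 - j))) := by
  ext i
  rw [mem_colRows, mem_Icc]
  have hm := card_colRows_le l r (c + 1 - j)
  by_cases hi : 1 ≤ i ∧ i ≤ r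
  · have key := le_iff_le_card_colRows hl (j := c + 1 - j) (show 1 ≤ r + 1 - i by omega)
      (show r + 1 - i ≤ r by omega)
    unfold lcomp
    rw [if_pos hi.2]
    omega
  · omega

end Shape

namespace IsSSYT

variable {l l' : ℕ → ℕ} {r c : ℕ} {t : ℕ → ℕ → ℕ}

lemma congr (h : Set.EqOn l l' (Set.Ici 1)) (ht : IsSSYT l r t) : IsSSYT l' r t := by
  obtain ⟨hbound, hrow, hcol, hzero⟩ := ht
  refine ⟨fun i j hi hj hji => hbound i j hi hj ?_, fun i j hi hj hji => hrow i j hi hj ?_,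
    fun i j hi hj hji => hcol i j hi hj ?_, fun i j hij => hzero i j fun h' => hij ?_⟩
  · rwa [h hi]
  · rwa [h hi]
  · rwa [h (show 1 ≤ i + 1 by omega)]
  · rwa [← h h'.1]

lemma strictMonoOn_col (ht : IsSSYT l r t) (hl : Antitone l) {j : ℕ} (hj : 1 ≤ j) :
    StrictMonoOn (t · j) (colRows l r j) := by
  have hconn : (colRows l r j : Set ℕ).OrdConnected := ⟨fun a ha b hb i hi => by
    simp only [mem_coe, mem_colRows] at ha hb ⊢
    exact ⟨⟨ha.1.1.trans hi.1, hi.2.trans hb.1.2⟩, hb.2.trans (hl hi.2)⟩⟩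
  refine strictMonoOn_of_lt_succ hconn fun i _ hi hi' => ?_
  simp only [mem_coe, mem_colRows, Order.succ_eq_add_one] at hi hi' ⊢
  exact ht.2.2.1 i j hi.1.1 hj hi'.2

lemma colEntries_subset (ht : IsSSYT l r t) {j : ℕ} (hj : 1 ≤ j) :
    colEntries l r t j ⊆ Icc 1 r := by
  rw [colEntries_eq_image, image_subset_iff]
  intro i hi
  obtain ⟨⟨hi1, -⟩, hji⟩ := mem_colRows.1 hi
  exact mem_Icc.2 (ht.1 i j hi1 hj hji)

lemma card_colEntries (ht : IsSSYT l r t) (hl : Antitone l) {j : ℕ} (hj : 1 ≤ j) :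
    #(colEntries l r t j) = #(colRows l r j) :=
  card_image_of_injOn (ht.strictMonoOn_col hl hj).injOn

lemma count_colEntries_succ_le (ht : IsSSYT l r t) (hl : Antitone l) {j : ℕ} (hj : 1 ≤ j)
    (x : ℕ) :
    Nat.count (· ∈ colEntries l r t (j + 1)) x ≤ Nat.count (· ∈ colEntries l r t j) x := by
  rw [colEntries_eq_image, colEntries_eq_image,
    count_mem_image (ht.strictMonoOn_col hl (by omega)).injOn,
    count_mem_image (ht.strictMonoOn_col hl hj).injOn]
  refine card_le_card fun i hi => ?_
  simp only [mem_filter, mem_colRows] at hi ⊢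
  obtain ⟨⟨hir, hji⟩, hx⟩ := hi
  exact ⟨⟨hir, by omega⟩, (ht.2.1 i j hir.1 hj hji).trans_lt hx⟩

lemma count_colEntries_apply (ht : IsSSYT l r t) (hl : Antitone l) {i j : ℕ} (hj : 1 ≤ j)
    (hi : i ∈ colRows l r j) : Nat.count (· ∈ colEntries l r t j) (t i j) = i - 1 := by
  have hmono := ht.strictMonoOn_col hl hj
  have hbelow : {i' ∈ colRows l r j | t i' j < t i j} = Ico 1 i := by
    ext i'
    simp only [mem_filter, mem_Ico]
    obtain ⟨⟨hi1, hir⟩, hji⟩ := mem_colRows.1 hi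
    constructor
    · rintro ⟨hi', hlt⟩
      exact ⟨(mem_colRows.1 hi').1.1, (hmono.lt_iff_lt hi' hi).1 hlt⟩
    · rintro ⟨hi'1, hi'i⟩
      have hi' : i' ∈ colRows l r j :=
        mem_colRows.2 ⟨⟨hi'1, by omega⟩, hji.trans (hl hi'i.le)⟩
      exact ⟨hi', hmono hi' hi hi'i⟩
  rw [colEntries_eq_image, count_mem_image hmono.injOn, hbelow, Nat.card_Ico]

lemma nth_colEntries (ht : IsSSYT l r t) (hl : Antitone l) {i j : ℕ} (hj : 1 ≤ j)
    (hi : i ∈ colRows l r j) : Nat.nth (· ∈ colEntries l r t j) (i - 1) = t i j := by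
  rw [← ht.count_colEntries_apply hl hj hi]
  exact Nat.nth_count (mem_image_of_mem _ hi)

end IsSSYT

section Complement

variable {l l' : ℕ → ℕ} {r c : ℕ} {t : ℕ → ℕ → ℕ}

def complColumn (l : ℕ → ℕ) (r c : ℕ) (t : ℕ → ℕ → ℕ) (j : ℕ) : Finset ℕ :=
  Icc 1 r \ colEntries l r t (c + 1 - j)

lemma complMap_of_le {i j : ℕ} (h : 1 ≤ i ∧ 1 ≤ j ∧ j ≤ lcomp l r c i) :
    complMap l r c t i j = Nat.nth (· ∈ complColumn l r c t j) (i - 1) := by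
  rw [complMap, if_pos h, sort_getD_eq_nth]
  rfl

lemma complMap_of_not_le {i j : ℕ} (h : ¬(1 ≤ i ∧ 1 ≤ j ∧ j ≤ lcomp l r c i)) :
    complMap l r c t i j = 0 :=
  if_neg h

lemma complMap_congr (h : Set.EqOn l l' (Set.Ici 1)) : complMap l r c = complMap l' r c := by
  funext t i j
  simp only [complMap, lcomp_congr h, colEntries_eq_image, colRows_congr h]

namespace IsSSYT

lemma card_complColumn (ht : IsSSYT l r t) (hl : Antitone l) {j : ℕ} (hj : 1 ≤ j)
    (hjc : j ≤ c) : #(complColumn l r c t j) = #(colRows (lcomp l r c) r j) := by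
  rw [complColumn, card_sdiff_of_subset (ht.colEntries_subset (by omega)),
    ht.card_colEntries hl (by omega), colRows_lcomp hl hj hjc, Nat.card_Icc, Nat.card_Icc]
  omega

lemma lt_card_complColumn (ht : IsSSYT l r t) (hl : Antitone l) {i j : ℕ} (hi : 1 ≤ i)
    (hj : 1 ≤ j) (hij : j ≤ lcomp l r c i) : i - 1 < #(complColumn l r c t j) := by
  have hir : i ≤ r := by
    by_contra! h
    rw [lcomp_eq_zero h] at hij
    omega
  rw [ht.card_complColumn hl hj (hij.trans (lcomp_le l r c i))]
  have := (le_iff_le_card_colRows (lcomp_antitone hl) hi hir).1 hij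
  omega

lemma count_complColumn_succ_le (ht : IsSSYT l r t) (hl : Antitone l) {j : ℕ}
    (hjc : j + 1 ≤ c) (x : ℕ) :
    Nat.count (· ∈ complColumn l r c t (j + 1)) x ≤ Nat.count (· ∈ complColumn l r c t j) x := by
  have hsucc : c + 1 - j = c - j + 1 := by omega
  rw [complColumn, complColumn, count_mem_sdiff (ht.colEntries_subset (by omega)),
    count_mem_sdiff (ht.colEntries_subset (by omega)), hsucc,
    show c + 1 - (j + 1) = c - j by omega]
  exact Nat.sub_le_sub_left (ht.count_colEntries_succ_le hl (by omega) x) _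

end IsSSYT

theorem isSSYT_complMap (ht : IsSSYT l r t) (hl : Antitone l) :
    IsSSYT (lcomp l r c) r (complMap l r c t) := by
  have hcard {i j : ℕ} (hi : 1 ≤ i) (hj : 1 ≤ j) (hij : j ≤ lcomp l r c i) :
      ∀ hf : (Set.ofPred (· ∈ complColumn l r c t j)).Finite, i - 1 < #hf.toFinset :=
    fun hf => by
      rw [card_toFinset_ofPred_mem]
      exact ht.lt_card_complColumn hl hi hj hij
  refine ⟨fun i j hi hj hij => ?_, fun i j hi hj hij => ?_, fun i j hi hj hij => ?_,
    fun i j hij => complMap_of_not_le hij⟩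
  · rw [complMap_of_le ⟨hi, hj, hij⟩]
    exact mem_Icc.1 (mem_sdiff.1 (nth_mem (ht.lt_card_complColumn hl hi hj hij))).1
  · have hij' : j ≤ lcomp l r c i := by omega
    rw [complMap_of_le ⟨hi, hj, hij'⟩, complMap_of_le ⟨hi, by omega, hij⟩]
    exact Nat.nth_le_nth_of_count_le
      (ht.count_complColumn_succ_le hl (hij.trans (lcomp_le l r c i))) (hcard hi (by omega) hij)
  · have hij' : j ≤ lcomp l r c i := hij.trans (lcomp_antitone hl (Nat.le_succ i))
    rw [complMap_of_le ⟨hi, hj, hij'⟩, complMap_of_le ⟨by omega, hj, hij⟩]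
    exact nth_lt_nth (by omega) (ht.lt_card_complColumn hl (by omega) hj hij)

namespace IsSSYT

lemma colEntries_complMap (ht : IsSSYT l r t) (hl : Antitone l) {j : ℕ} (hj : 1 ≤ j)
    (hjc : j ≤ c) : colEntries (lcomp l r c) r (complMap l r c t) j = complColumn l r c t j := by
  refine eq_of_subset_of_card_le (fun y hy => ?_) ?_
  · obtain ⟨i, hi, rfl⟩ := mem_image.1 hy
    obtain ⟨⟨hi1, -⟩, hij⟩ := mem_colRows.1 hi
    rw [complMap_of_le ⟨hi1, hj, hij⟩]
    exact nth_mem (ht.lt_card_complColumn hl hi1 hj hij)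
  · rw [ht.card_complColumn hl hj hjc,
      (isSSYT_complMap ht hl).card_colEntries (lcomp_antitone hl) hj]

lemma complColumn_complMap (ht : IsSSYT l r t) (hl : Antitone l) {j : ℕ} (hj : 1 ≤ j)
    (hjc : j ≤ c) : complColumn (lcomp l r c) r c (complMap l r c t) j = colEntries l r t j := by
  rw [complColumn, ht.colEntries_complMap hl (by omega) (by omega), complColumn,
    show c + 1 - (c + 1 - j) = j by omega, Finset.sdiff_sdiff_eq_self (ht.colEntries_subset hj)]

theorem complMap_complMap (ht : IsSSYT l r t) (hl : Antitone l) (hr : ∀ i, r < i → l i = 0)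
    (hc : ∀ i, l i ≤ c) : complMap (lcomp l r c) r c (complMap l r c t) = t := by
  funext i j
  have hcond :
      (1 ≤ i ∧ 1 ≤ j ∧ j ≤ lcomp (lcomp l r c) r c i) ↔ (1 ≤ i ∧ 1 ≤ j ∧ j ≤ l i) :=
    and_congr_right fun hi => by rw [lcomp_lcomp hr hc hi]
  by_cases hij : 1 ≤ i ∧ 1 ≤ j ∧ j ≤ l i
  · obtain ⟨hi, hj, hji⟩ := hij
    have hir : i ≤ r := by
      by_contra! h
      rw [hr i h] at hji
      omega
    rw [complMap_of_le (hcond.2 ⟨hi, hj, hji⟩), ht.complColumn_complMap hl hj (hji.trans (hc i)),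
      ht.nth_colEntries hl hj (mem_colRows.2 ⟨⟨hi, hir⟩, hji⟩)]
  · rw [complMap_of_not_le (mt hcond.1 hij), ht.2.2.2 i j hij]

end IsSSYT

end Complement

theorem king_bijection_general (r c : ℕ) (l : ℕ → ℕ)
    (hA : ∀ i, l (i + 1) ≤ l i) (hr : ∀ i, r < i → l i = 0) (hc : ∀ i, l i ≤ c) :
    Set.BijOn (complMap l r c) {t | IsSSYT l r t}
        {u | IsSSYT (lcomp l r c) r u} ∧
      Set.ncard {t | IsSSYT l r t} = Set.ncard {u | IsSSYT (lcomp l r c) r u} := by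
  have hl : Antitone l := antitone_nat_of_succ_le hA
  have hl' : Antitone (lcomp l r c) := lcomp_antitone hl
  have hll : Set.EqOn (lcomp (lcomp l r c) r c) l (Set.Ici 1) := lcomp_lcomp hr hc
  have hinv : Set.InvOn (complMap (lcomp l r c) r c) (complMap l r c)
      {t | IsSSYT l r t} {u | IsSSYT (lcomp l r c) r u} := by
    refine ⟨fun t ht => ht.complMap_complMap hl hr hc, fun u hu => ?_⟩
    rw [← complMap_congr hll]
    exact IsSSYT.complMap_complMap hu hl' (fun i => lcomp_eq_zero) (lcomp_le l r c)
  have hbij := hinv.bijOn (fun t ht => isSSYT_complMap ht hl)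
    (fun u hu => (isSSYT_complMap hu hl').congr hll)
  exact ⟨hbij, hbij.ncard_eq⟩

/-- **King's bijection.** For `λ` inside the `r × c` rectangle, the
column-complement map `t ↦ t°` is a bijection from `SSYT_r(λ)` onto
`SSYT_r(λ°)`; in particular the two sets have the same cardinality. -/
theorem king_bijection (r c : ℕ) (hr0 : 0 < r) (hc0 : 0 < c) (l : ℕ → ℕ)
    (hA : ∀ i, l (i + 1) ≤ l i) (hr : ∀ i, r < i → l i = 0) (hc : ∀ i, l i ≤ c) :
    Set.BijOn (complMap l r c) {t | IsSSYT l r t}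
        {u | IsSSYT (lcomp l r c) r u} ∧
      Set.ncard {t | IsSSYT l r t} = Set.ncard {u | IsSSYT (lcomp l r c) r u} :=
  king_bijection_general r c l hA hr hc
end

section
/- Let λ be a partition of n contained in the r × c rectangle and let λ° be its complement in the rectangle. Then s_{λ°}(q, q², …, q^r) = q^{(r+1)(rc/2 − n)} · s_λ(q, q², …, q^r), as polynomials in q (assuming rc is even, or interpreting (r+1)(rc−2n)/2 as the exponent). -/
/-!
Tableaux of shape `λ` with entries in `{1, …, r}` correspond to Gelfand–Tsetlin patterns with top
level `λ` (level `k` being the shape of the entries `≤ k`), and the weight of a tableau is a linear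
function of the level sums. Composing the Bender–Knuth involutions along a reduced word for the
longest permutation of `{1, …, r}` reverses the content, sending the weight `w` to `(r + 1) n - w`.
Reversing and complementing every level in `c` then gives a pattern with top level `λ°` and sends
`w` to `c r (r + 1) / 2 - w`. The composite is a bijection `SSYT_r(λ) → SSYT_r(λ°)` raising every
weight by `(r + 1)(r c / 2 - n)`.
-/

namespace IsSSYT

variable {l : ℕ → ℕ} {r : ℕ} {t : ℕ → ℕ → ℕ}

theorem bounds (ht : IsSSYT l r t) {i j : ℕ} (hi : 1 ≤ i) (hj : 1 ≤ j) (hjl : j ≤ l i) :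
    1 ≤ t i j ∧ t i j ≤ r :=
  ht.1 i j hi hj hjl

theorem eq_zero (ht : IsSSYT l r t) {i j : ℕ} (h : ¬(1 ≤ i ∧ 1 ≤ j ∧ j ≤ l i)) : t i j = 0 :=
  ht.2.2.2 i j h

theorem col_lt (ht : IsSSYT l r t) {i j : ℕ} (hi : 1 ≤ i) (hj : 1 ≤ j) (hjl : j ≤ l (i + 1)) :
    t i j < t (i + 1) j :=
  ht.2.2.1 i j hi hj hjl

theorem row_mono (ht : IsSSYT l r t) {i j j' : ℕ} (hi : 1 ≤ i) (hj : 1 ≤ j) (hjj' : j ≤ j')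
    (hj' : j' ≤ l i) : t i j ≤ t i j' := by
  induction j', hjj' using Nat.le_induction with
  | base => rfl
  | succ d hd ih => exact (ih (by omega)).trans (ht.2.1 i d hi (by omega) hj')

theorem le_entry (ht : IsSSYT l r t) (hl : Antitone l) {i j : ℕ} (hi : 1 ≤ i) (hj : 1 ≤ j)
    (hjl : j ≤ l i) : i ≤ t i j := by
  induction i, hi using Nat.le_induction with
  | base => exact (bounds ht le_rfl hj hjl).1
  | succ d hd ih =>
    have := col_lt ht hd hj hjl
    have := ih (hjl.trans (hl (Nat.le_succ d)))
    omega

end IsSSYT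

namespace SchurComplement

open Finset

variable {l : ℕ → ℕ} {r c a : ℕ} {p : ℕ → ℕ → ℕ}

theorem le_card_filter_Icc_iff {m k : ℕ} {P : ℕ → Prop} [DecidablePred P]
    (hP : ∀ x y, 1 ≤ x → x ≤ y → y ≤ m → P y → P x) (hk : 1 ≤ k) (hkm : k ≤ m) :
    k ≤ #{x ∈ Icc 1 m | P x} ↔ P k := by
  constructor
  · intro hcard
    by_contra hPk
    have hsub : {x ∈ Icc 1 m | P x} ⊆ Icc 1 (k - 1) := by
      intro x hx
      simp only [mem_filter, mem_Icc] at hx ⊢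
      refine ⟨hx.1.1, ?_⟩
      by_contra hxk
      exact hPk (hP k x hk (by omega) hx.1.2 hx.2)
    have := card_le_card hsub
    simp only [Nat.card_Icc] at this
    omega
  · intro hPk
    have hsub : Icc 1 k ⊆ {x ∈ Icc 1 m | P x} := by
      intro x hx
      simp only [mem_filter, mem_Icc] at hx ⊢
      exact ⟨⟨hx.1, by omega⟩, hP x k hx.1 hx.2 hkm hPk⟩
    simpa using card_le_card hsub

/-- A Gelfand–Tsetlin pattern with top level `l`: `p k i` is the `i`-th part of level `k`, which
has `k` parts. -/
structure IsGTPattern (l : ℕ → ℕ) (r : ℕ) (p : ℕ → ℕ → ℕ) : Prop where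
  top : ∀ i, 1 ≤ i → p r i = l i
  le_succ : ∀ k i, 1 ≤ k → k + 1 ≤ r → p k i ≤ p (k + 1) i
  succ_succ_le : ∀ k i, 1 ≤ k → k + 1 ≤ r → 1 ≤ i → p (k + 1) (i + 1) ≤ p k i
  eq_zero : ∀ k i, ¬(1 ≤ k ∧ k ≤ r ∧ 1 ≤ i ∧ i ≤ k) → p k i = 0

namespace IsGTPattern

theorem mono (hp : IsGTPattern l r p) (i : ℕ) {k k' : ℕ} (hk : 1 ≤ k) (hkk' : k ≤ k')
    (hk' : k' ≤ r) : p k i ≤ p k' i := by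
  induction k', hkk' using Nat.le_induction with
  | base => rfl
  | succ d hd ih => exact (ih (by omega)).trans (hp.le_succ d i (by omega) hk')

theorem le_top (hp : IsGTPattern l r p) {k i : ℕ} (hk : 1 ≤ k) (hkr : k ≤ r) (hi : 1 ≤ i) :
    p k i ≤ l i :=
  hp.top i hi ▸ hp.mono i hk hkr le_rfl

theorem congr_top {l' : ℕ → ℕ} (hp : IsGTPattern l r p) (h : ∀ i, 1 ≤ i → l i = l' i) :
    IsGTPattern l' r p :=
  ⟨fun i hi => (hp.top i hi).trans (h i hi), hp.le_succ, hp.succ_succ_le, hp.eq_zero⟩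

theorem lt_iff_le_card (hp : IsGTPattern l r p) {k : ℕ} (i j : ℕ) (hk : 1 ≤ k) (hkr : k ≤ r) :
    p k i < j ↔ k ≤ #{k' ∈ Icc 1 r | p k' i < j} :=
  (le_card_filter_Icc_iff (fun _ _ hx hxy hy h => (hp.mono i hx hxy hy).trans_lt h) hk hkr).symm

theorem card_lt (hp : IsGTPattern l r p) {i j : ℕ} (hi : 1 ≤ i) (hj : 1 ≤ j) (hjl : j ≤ l i) :
    #{k ∈ Icc 1 r | p k i < j} < r := by
  have hr : 1 ≤ r := by
    by_contra hr
    have := hp.top i hi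
    rw [hp.eq_zero r i (by omega)] at this
    omega
  by_contra h
  have := (hp.lt_iff_le_card i j hr le_rfl).mpr (by omega)
  rw [hp.top i hi] at this
  omega

end IsGTPattern

/-- Level `k` of the pattern is the shape of the entries `≤ k` of the tableau. -/
def toGT (l : ℕ → ℕ) (r : ℕ) (t : ℕ → ℕ → ℕ) (k i : ℕ) : ℕ :=
  if 1 ≤ k ∧ k ≤ r ∧ 1 ≤ i ∧ i ≤ k then #{j ∈ Icc 1 (l i) | t i j ≤ k} else 0

/-- The entry in cell `(i, j)` is the first level whose `i`-th part reaches `j`. -/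
def ofGT (l : ℕ → ℕ) (r : ℕ) (p : ℕ → ℕ → ℕ) (i j : ℕ) : ℕ :=
  if 1 ≤ i ∧ 1 ≤ j ∧ j ≤ l i then 1 + #{k ∈ Icc 1 r | p k i < j} else 0

theorem isGTPattern_toGT {t : ℕ → ℕ → ℕ} (ht : IsSSYT l r t) (hl : Antitone l)
    (hlr : ∀ i, r < i → l i = 0) : IsGTPattern l r (toGT l r t) where
  top i hi := by
    by_cases hir : i ≤ r
    · rw [toGT, if_pos ⟨by omega, le_rfl, hi, hir⟩, filter_true_of_mem, Nat.card_Icc,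
        Nat.add_sub_cancel]
      intro j hj
      rw [mem_Icc] at hj
      exact (IsSSYT.bounds ht hi hj.1 hj.2).2
    · rw [toGT, if_neg (by omega), hlr i (by omega)]
  le_succ k i hk hkr := by
    unfold toGT
    split_ifs with h h'
    · exact card_le_card (monotone_filter_right _ fun _ _ _ => by omega)
    · omega
    · exact Nat.zero_le _
    · exact Nat.zero_le _
  succ_succ_le k i hk hkr hi := by
    unfold toGT
    split_ifs with h h'
    · refine card_le_card fun j hj => ?_
      simp only [mem_filter, mem_Icc] at hj ⊢
      have := IsSSYT.col_lt ht hi hj.1.1 hj.1.2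
      exact ⟨⟨hj.1.1, hj.1.2.trans (hl (Nat.le_succ i))⟩, by omega⟩
    · omega
    · exact Nat.zero_le _
    · rfl
  eq_zero k i h := by rw [toGT, if_neg h]

theorem isSSYT_ofGT (hp : IsGTPattern l r p) (hl : Antitone l) :
    IsSSYT l r (ofGT l r p) := by
  refine ⟨fun i j hi hj hjl => ?_, fun i j hi hj hjl => ?_, fun i j hi hj hjl => ?_,
    fun i j h => by rw [ofGT, if_neg h]⟩
  · rw [ofGT, if_pos ⟨hi, hj, hjl⟩]
    have := hp.card_lt hi hj hjl
    omega
  · rw [ofGT, if_pos ⟨hi, hj, by omega⟩, ofGT, if_pos ⟨hi, by omega, hjl⟩]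
    have := card_le_card (monotone_filter_right (Icc 1 r)
      fun k _ (hk : p k i < j) => (by omega : p k i < j + 1))
    omega
  · have hjl' : j ≤ l i := hjl.trans (hl (Nat.le_succ i))
    rw [ofGT, if_pos ⟨hi, hj, hjl'⟩, ofGT, if_pos ⟨by omega, hj, hjl⟩]
    set m := #{k ∈ Icc 1 r | p k i < j}
    have hmr : m < r := hp.card_lt hi hj hjl'
    -- the entry at `(i, j)` is `m + 1`; the one below exceeds it as `p (m + 1) (i + 1) ≤ p m i < j`
    have hsucc : p (m + 1) (i + 1) < j := by
      rcases Nat.eq_zero_or_pos m with hm | hm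
      · rw [hm, hp.eq_zero 1 (i + 1) (by omega)]
        omega
      · exact (hp.succ_succ_le m i hm (by omega) hi).trans_lt
          ((hp.lt_iff_le_card i j hm hmr.le).mpr le_rfl)
    have := (hp.lt_iff_le_card (i + 1) j (by omega) hmr).mp hsucc
    omega

theorem ofGT_toGT {t : ℕ → ℕ → ℕ} (ht : IsSSYT l r t) (hl : Antitone l) :
    ofGT l r (toGT l r t) = t := by
  funext i j
  by_cases hcell : 1 ≤ i ∧ 1 ≤ j ∧ j ≤ l i
  · obtain ⟨hi, hj, hjl⟩ := hcell
    have hbounds := IsSSYT.bounds ht hi hj hjl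
    have hlow := IsSSYT.le_entry ht hl hi hj hjl
    have hlevel : ∀ k, 1 ≤ k → k ≤ r → (toGT l r t k i < j ↔ k < t i j) := by
      intro k hk hkr
      by_cases hik : i ≤ k
      · rw [toGT, if_pos ⟨hk, hkr, hi, hik⟩, lt_iff_not_ge, le_card_filter_Icc_iff
          (fun _ _ hx hxy hy h => (IsSSYT.row_mono ht hi hx hxy hy).trans h) hj hjl]
        omega
      · rw [toGT, if_neg (by omega)]
        omega
    have hfilter : {k ∈ Icc 1 r | toGT l r t k i < j} = Icc 1 (t i j - 1) := by
      ext k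
      simp only [mem_filter, mem_Icc]
      constructor
      · rintro ⟨hk, hlt⟩
        have := (hlevel k hk.1 hk.2).mp hlt
        omega
      · rintro ⟨hk, hkt⟩
        exact ⟨⟨hk, by omega⟩, (hlevel k hk (by omega)).mpr (by omega)⟩
    rw [ofGT, if_pos ⟨hi, hj, hjl⟩, hfilter, Nat.card_Icc]
    omega
  · rw [ofGT, if_neg hcell, IsSSYT.eq_zero ht hcell]

theorem toGT_ofGT (hp : IsGTPattern l r p) : toGT l r (ofGT l r p) = p := by
  funext k i
  by_cases hki : 1 ≤ k ∧ k ≤ r ∧ 1 ≤ i ∧ i ≤ k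
  · obtain ⟨hk, hkr, hi, hik⟩ := hki
    have hpl := hp.le_top hk hkr hi
    have hfilter : {j ∈ Icc 1 (l i) | ofGT l r p i j ≤ k} = Icc 1 (p k i) := by
      ext j
      simp only [mem_filter, mem_Icc]
      constructor
      · rintro ⟨hj, hle⟩
        rw [ofGT, if_pos ⟨hi, hj⟩] at hle
        have := (hp.lt_iff_le_card i j hk hkr).not
        omega
      · rintro ⟨hj, hjp⟩
        rw [ofGT, if_pos ⟨hi, hj, by omega⟩]
        have := (hp.lt_iff_le_card i j hk hkr).not
        exact ⟨⟨hj, by omega⟩, by omega⟩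
    rw [toGT, if_pos ⟨hk, hkr, hi, hik⟩, hfilter, Nat.card_Icc, Nat.add_sub_cancel]
  · rw [toGT, if_neg hki, hp.eq_zero k i hki]

def levelSum (r : ℕ) (p : ℕ → ℕ → ℕ) (k : ℕ) : ℤ := ∑ i ∈ Icc 1 r, (p k i : ℤ)

theorem levelSum_top (hp : IsGTPattern l r p) : levelSum r p r = ∑ i ∈ Icc 1 r, (l i : ℤ) :=
  sum_congr rfl fun i hi => by rw [hp.top i (mem_Icc.mp hi).1]

theorem levelSum_zero (hp : IsGTPattern l r p) : levelSum r p 0 = 0 :=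
  sum_eq_zero fun i _ => by rw [hp.eq_zero 0 i (by omega), Nat.cast_zero]

theorem wt_ofGT (hp : IsGTPattern l r p) :
    (wt l r (ofGT l r p) : ℤ) = (r + 1) * levelSum r p r - ∑ k ∈ range (r + 1), levelSum r p k := by
  have hrow : ∀ i ∈ Icc 1 r, ∑ j ∈ Icc 1 (l i), ofGT l r p i j
      = l i + ∑ k ∈ Icc 1 r, (l i - p k i) := by
    intro i hi
    rw [mem_Icc] at hi
    have hcell : ∀ j ∈ Icc 1 (l i),
        ofGT l r p i j = 1 + ∑ k ∈ Icc 1 r, if p k i < j then 1 else 0 :=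
      fun j hj => by rw [mem_Icc] at hj; rw [ofGT, if_pos ⟨hi.1, hj⟩, card_filter]
    rw [sum_congr rfl hcell, sum_add_distrib, sum_comm, sum_const, Nat.card_Icc, smul_eq_mul,
      mul_one, Nat.add_sub_cancel]
    congr 1
    refine sum_congr rfl fun k _ => ?_
    rw [← card_filter, ← Nat.card_Ioc]
    congr 1
    ext j
    simp only [mem_filter, mem_Icc, mem_Ioc]
    omega
  have hlevel : ∀ k ∈ Icc 1 r, ∑ i ∈ Icc 1 r, ((l i - p k i : ℕ) : ℤ)
      = levelSum r p r - levelSum r p k := by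
    intro k hk
    rw [mem_Icc] at hk
    rw [levelSum_top hp, levelSum, ← sum_sub_distrib]
    refine sum_congr rfl fun i hi => ?_
    have := hp.le_top hk.1 hk.2 (mem_Icc.mp hi).1
    omega
  rw [wt, sum_congr rfl hrow, Nat.range_succ_eq_Icc_zero, ← add_sum_Ioc_eq_sum_Icc (Nat.zero_le r),
    ← Icc_add_one_left_eq_Ioc, zero_add, levelSum_zero hp, zero_add]
  push_cast
  rw [sum_add_distrib, sum_comm, sum_congr rfl hlevel, sum_sub_distrib, sum_const, Nat.card_Icc,
    ← levelSum_top hp]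
  simp only [Nat.add_sub_cancel, nsmul_eq_mul]
  ring

def btLower (p : ℕ → ℕ → ℕ) (a i : ℕ) : ℕ := max (p (a + 1) (i + 1)) (p (a - 1) i)

-- `p (a - 1) 0` is `0`, not a bound: the first part is only bounded by level `a + 1`
def btUpper (p : ℕ → ℕ → ℕ) (a i : ℕ) : ℕ :=
  if i = 1 then p (a + 1) 1 else min (p (a + 1) i) (p (a - 1) (i - 1))

/-- The Bender–Knuth involution: interlacing with levels `a ± 1` confines `p a i` to the interval
`[btLower p a i, btUpper p a i]`, and `toggle` reflects it in that interval. -/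
def toggle (p : ℕ → ℕ → ℕ) (a : ℕ) (k i : ℕ) : ℕ :=
  if k = a ∧ 1 ≤ i ∧ i ≤ a then btLower p a i + btUpper p a i - p a i else p k i

theorem toggle_of_ne {k : ℕ} (h : k ≠ a) (i : ℕ) : toggle p a k i = p k i :=
  if_neg fun h' => h h'.1

theorem btLower_toggle (ha : 1 ≤ a) : btLower (toggle p a) a = btLower p a := by
  funext i
  rw [btLower, btLower, toggle_of_ne (by omega), toggle_of_ne (by omega)]

theorem btUpper_toggle (ha : 1 ≤ a) : btUpper (toggle p a) a = btUpper p a := by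
  funext i
  rw [btUpper, btUpper, toggle_of_ne (by omega), toggle_of_ne (by omega), toggle_of_ne (by omega)]

namespace IsGTPattern

theorem btLower_le (hp : IsGTPattern l r p) (ha : 1 ≤ a) (har : a + 1 ≤ r) {i : ℕ}
    (hi : 1 ≤ i) : btLower p a i ≤ p a i := by
  refine max_le (hp.succ_succ_le a i ha har hi) ?_
  rcases Nat.lt_or_ge a 2 with ha2 | ha2
  · rw [hp.eq_zero (a - 1) i (by omega)]
    exact Nat.zero_le _
  · simpa [Nat.sub_add_cancel ha] using hp.le_succ (a - 1) i (by omega) (by omega)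

theorem le_btUpper (hp : IsGTPattern l r p) (ha : 1 ≤ a) (har : a + 1 ≤ r) {i : ℕ}
    (hi : 1 ≤ i) : p a i ≤ btUpper p a i := by
  unfold btUpper
  split_ifs with hi1
  · exact hi1 ▸ hp.le_succ a 1 ha har
  · refine le_min (hp.le_succ a i ha har) ?_
    rcases Nat.lt_or_ge a 2 with ha2 | ha2
    · rw [hp.eq_zero a i (by omega)]
      exact Nat.zero_le _
    · simpa [Nat.sub_add_cancel ha, Nat.sub_add_cancel hi] using
        hp.succ_succ_le (a - 1) (i - 1) (by omega) (by omega) (by omega)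

theorem btLower_le_toggle (hp : IsGTPattern l r p) (ha : 1 ≤ a) (har : a + 1 ≤ r) {i : ℕ}
    (hi : 1 ≤ i) (hia : i ≤ a) : btLower p a i ≤ toggle p a a i := by
  rw [toggle, if_pos ⟨rfl, hi, hia⟩]
  have := hp.le_btUpper ha har hi
  omega

theorem toggle_le_btUpper (hp : IsGTPattern l r p) (ha : 1 ≤ a) (har : a + 1 ≤ r) {i : ℕ}
    (hi : 1 ≤ i) (hia : i ≤ a) : toggle p a a i ≤ btUpper p a i := by
  rw [toggle, if_pos ⟨rfl, hi, hia⟩]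
  have := hp.btLower_le ha har hi
  omega

theorem of_eq_off_level (hp : IsGTPattern l r p) (ha : 1 ≤ a) (har : a + 1 ≤ r) {q : ℕ → ℕ → ℕ}
    (hq : ∀ k i, k ≠ a → q k i = p k i)
    (hzero : ∀ i, ¬(1 ≤ i ∧ i ≤ a) → q a i = 0)
    (hlow : ∀ i, 1 ≤ i → i ≤ a → btLower p a i ≤ q a i)
    (hup : ∀ i, 1 ≤ i → i ≤ a → q a i ≤ btUpper p a i) : IsGTPattern l r q where
  top i hi := (hq r i (by omega)).trans (hp.top i hi)
  le_succ k i hk hkr := by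
    by_cases hka : k = a
    · subst hka
      rw [hq (k + 1) i (by omega)]
      by_cases hik : 1 ≤ i ∧ i ≤ k
      · have := hup i hik.1 hik.2
        unfold btUpper at this
        split_ifs at this with hi1
        · exact hi1 ▸ this
        · exact this.trans (min_le_left _ _)
      · rw [hzero i hik]
        exact Nat.zero_le _
    · rw [hq k i hka]
      by_cases hka' : k + 1 = a
      · subst hka'
        by_cases hik : 1 ≤ i ∧ i ≤ k + 1
        · simpa [btLower] using (le_max_right _ _).trans (hlow i hik.1 hik.2)
        · rw [hp.eq_zero k i (by omega)]
          exact Nat.zero_le _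
      · rw [hq (k + 1) i hka']
        exact hp.le_succ k i hk hkr
  succ_succ_le k i hk hkr hi := by
    by_cases hka : k = a
    · subst hka
      rw [hq (k + 1) (i + 1) (by omega)]
      by_cases hik : i ≤ k
      · exact (le_max_left _ _).trans (hlow i hi hik)
      · rw [hp.eq_zero (k + 1) (i + 1) (by omega)]
        exact Nat.zero_le _
    · rw [hq k i hka]
      by_cases hka' : k + 1 = a
      · subst hka'
        by_cases hik : i + 1 ≤ k + 1
        · have := hup (i + 1) (by omega) hik
          simp only [btUpper, Nat.add_sub_cancel] at this
          rw [if_neg (by omega)] at this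
          exact this.trans (min_le_right _ _)
        · rw [hzero (i + 1) (by omega)]
          exact Nat.zero_le _
      · rw [hq (k + 1) (i + 1) hka']
        exact hp.succ_succ_le k i hk hkr hi
  eq_zero k i h := by
    by_cases hka : k = a
    · subst hka
      exact hzero i (by omega)
    · rw [hq k i hka, hp.eq_zero k i h]

end IsGTPattern

theorem isGTPattern_toggle (hp : IsGTPattern l r p) (ha : 1 ≤ a) (har : a + 1 ≤ r) :
    IsGTPattern l r (toggle p a) :=
  hp.of_eq_off_level ha har (fun _ _ hk => toggle_of_ne hk _)
    (fun _ hi => by rw [toggle, if_neg (by tauto), hp.eq_zero a _ (by omega)])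
    (fun _ hi hia => hp.btLower_le_toggle ha har hi hia)
    (fun _ hi hia => hp.toggle_le_btUpper ha har hi hia)

theorem IsGTPattern.toggle_toggle (hp : IsGTPattern l r p) (ha : 1 ≤ a) (har : a + 1 ≤ r) :
    toggle (toggle p a) a = p := by
  funext k i
  by_cases hki : k = a ∧ 1 ≤ i ∧ i ≤ a
  · obtain ⟨rfl, hi, hik⟩ := hki
    have := hp.btLower_le ha har hi
    have := hp.le_btUpper ha har hi
    have hval : toggle p k k i = btLower p k i + btUpper p k i - p k i :=
      if_pos ⟨rfl, hi, hik⟩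
    rw [toggle, if_pos ⟨rfl, hi, hik⟩, btLower_toggle ha, btUpper_toggle ha, hval]
    omega
  · rw [toggle, if_neg hki, toggle, if_neg hki]

theorem sum_max_add_min_shift (A B : ℕ → ℕ) {m : ℕ} (hm : 1 ≤ m) :
    ∑ i ∈ Icc 1 m, (max (A (i + 1)) (B i) + if i = 1 then A 1 else min (A i) (B (i - 1))) =
      ∑ i ∈ Icc 1 m, A i + ∑ i ∈ Icc 1 (m - 1), B i + max (A (m + 1)) (B m) := by
  induction m, hm using Nat.le_induction with
  | base => simp [add_comm]
  | succ m hm ih =>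
    obtain ⟨m', rfl⟩ : ∃ m', m = m' + 1 := ⟨m - 1, by omega⟩
    have hA := sum_Icc_succ_top (show 1 ≤ m' + 1 + 1 by omega) A
    have hB := sum_Icc_succ_top (show 1 ≤ m' + 1 by omega) B
    have := max_add_min (A (m' + 1 + 1)) (B (m' + 1))
    conv_lhs => rw [sum_Icc_succ_top (by omega), ih, if_neg (by omega)]
    simp only [Nat.add_sub_cancel] at hA hB ⊢
    omega

theorem levelSum_toggle_of_ne {k : ℕ} (h : k ≠ a) : levelSum r (toggle p a) k = levelSum r p k :=
  sum_congr rfl fun i _ => by rw [toggle_of_ne h]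

namespace IsGTPattern

theorem levelSum_eq_sum_Icc (hp : IsGTPattern l r p) {k : ℕ} (hk : k ≤ r) :
    levelSum r p k = ∑ i ∈ Icc 1 k, (p k i : ℤ) :=
  (sum_subset (Icc_subset_Icc le_rfl hk) fun i hi hik => by
    simp only [mem_Icc] at hi hik
    rw [hp.eq_zero k i (by omega), Nat.cast_zero]).symm

theorem levelSum_toggle (hp : IsGTPattern l r p) (ha : 1 ≤ a) (har : a + 1 ≤ r) :
    levelSum r (toggle p a) a = levelSum r p (a + 1) + levelSum r p (a - 1) - levelSum r p a := by
  have hval : ∀ i ∈ Icc 1 a,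
      (toggle p a a i : ℤ) = ((btLower p a i + btUpper p a i : ℕ) : ℤ) - p a i := by
    intro i hi
    rw [mem_Icc] at hi
    have := hp.le_btUpper ha har hi.1
    rw [toggle, if_pos ⟨rfl, hi⟩]
    omega
  rw [(isGTPattern_toggle hp ha har).levelSum_eq_sum_Icc (by omega), sum_congr rfl hval,
    sum_sub_distrib, ← Nat.cast_sum, hp.levelSum_eq_sum_Icc har, hp.levelSum_eq_sum_Icc (by omega),
    hp.levelSum_eq_sum_Icc (by omega)]
  simp only [btLower, btUpper]
  rw [sum_max_add_min_shift _ _ ha, hp.eq_zero (a - 1) a (by omega), Nat.max_zero,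
    sum_Icc_succ_top (by omega)]
  push_cast
  ring

end IsGTPattern

/-- The number of entries `j` of the tableau `ofGT l r p`. -/
def content (r : ℕ) (p : ℕ → ℕ → ℕ) (j : ℕ) : ℤ := levelSum r p j - levelSum r p (j - 1)

theorem IsGTPattern.levelSum_eq_sum_content (hp : IsGTPattern l r p) (k : ℕ) :
    levelSum r p k = ∑ j ∈ range k, content r p (j + 1) := by
  simp only [content, Nat.add_sub_cancel]
  rw [sum_range_sub, levelSum_zero hp, sub_zero]

theorem IsGTPattern.content_toggle (hp : IsGTPattern l r p) (ha : 1 ≤ a) (har : a + 1 ≤ r) :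
    content r (toggle p a) = content r p ∘ Equiv.swap a (a + 1) := by
  funext j
  simp only [content, Function.comp_apply, Equiv.swap_apply_def]
  split_ifs with hja hja'
  · subst hja
    rw [hp.levelSum_toggle ha har, levelSum_toggle_of_ne (by omega), Nat.add_sub_cancel]
    ring
  · subst hja'
    rw [levelSum_toggle_of_ne (by omega), Nat.add_sub_cancel, hp.levelSum_toggle ha har]
    ring
  · rw [levelSum_toggle_of_ne hja, levelSum_toggle_of_ne (by omega)]

def toggles (p : ℕ → ℕ → ℕ) (L : List ℕ) : ℕ → ℕ → ℕ := L.foldl toggle p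

def adjSwaps (L : List ℕ) : Equiv.Perm ℕ := (L.map fun a => Equiv.swap a (a + 1)).prod

theorem isGTPattern_toggles {L : List ℕ} (hp : IsGTPattern l r p)
    (hL : ∀ a ∈ L, 1 ≤ a ∧ a + 1 ≤ r) : IsGTPattern l r (toggles p L) := by
  induction L generalizing p with
  | nil => exact hp
  | cons a L ih =>
    have ha := hL a List.mem_cons_self
    exact ih (isGTPattern_toggle hp ha.1 ha.2) fun b hb => hL b (List.mem_cons_of_mem a hb)

namespace IsGTPattern

variable {L : List ℕ}

theorem toggles_toggles_reverse (hp : IsGTPattern l r p) (hL : ∀ a ∈ L, 1 ≤ a ∧ a + 1 ≤ r) :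
    toggles (toggles p L) L.reverse = p := by
  induction L generalizing p with
  | nil => rfl
  | cons a L ih =>
    have ha := hL a List.mem_cons_self
    have := ih (isGTPattern_toggle hp ha.1 ha.2) fun b hb => hL b (List.mem_cons_of_mem a hb)
    simp only [toggles, List.reverse_cons, List.foldl_append, List.foldl_cons,
      List.foldl_nil] at this ⊢
    rw [this]
    exact hp.toggle_toggle ha.1 ha.2

theorem content_toggles (hp : IsGTPattern l r p) (hL : ∀ a ∈ L, 1 ≤ a ∧ a + 1 ≤ r) :
    content r (toggles p L) = content r p ∘ adjSwaps L := by
  induction L generalizing p with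
  | nil => rfl
  | cons a L ih =>
    have ha := hL a List.mem_cons_self
    rw [toggles, List.foldl_cons, ← toggles,
      ih (isGTPattern_toggle hp ha.1 ha.2) fun b hb => hL b (List.mem_cons_of_mem a hb),
      hp.content_toggle ha.1 ha.2]
    simp only [adjSwaps, List.map_cons, List.prod_cons, Equiv.Perm.coe_mul]
    rfl

end IsGTPattern

/-- A reduced word for the longest permutation `j ↦ r + 1 - j` of `{1, …, r}`. -/
def revWord : ℕ → List ℕ
  | 0 => []
  | d + 1 => revWord d ++ (List.range' 1 d).reverse

theorem mem_revWord {r a : ℕ} (h : a ∈ revWord r) : 1 ≤ a ∧ a + 1 ≤ r := by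
  induction r with
  | zero => simp [revWord] at h
  | succ d ih =>
    rw [revWord, List.mem_append, List.mem_reverse, List.mem_range'_1] at h
    rcases h with h | h
    · have := ih h
      omega
    · omega

theorem adjSwaps_range'_reverse (d j : ℕ) :
    adjSwaps (List.range' 1 d).reverse j =
      if j = 1 then d + 1 else if 1 < j ∧ j ≤ d + 1 then j - 1 else j := by
  induction d generalizing j with
  | zero =>
    simp only [adjSwaps, List.range'_zero, List.reverse_nil, List.map_nil, List.prod_nil,
      Equiv.Perm.one_apply]
    split_ifs <;> omega
  | succ d ih =>
    rw [List.range'_concat, List.reverse_append, adjSwaps, List.reverse_singleton,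
      List.singleton_append, List.map_cons, List.prod_cons, Equiv.Perm.mul_apply, ← adjSwaps, ih,
      Equiv.swap_apply_def]
    split_ifs <;> omega

theorem adjSwaps_revWord (r j : ℕ) :
    adjSwaps (revWord r) j = if 1 ≤ j ∧ j ≤ r then r + 1 - j else j := by
  induction r generalizing j with
  | zero =>
    simp only [revWord, adjSwaps, List.map_nil, List.prod_nil, Equiv.Perm.one_apply]
    split_ifs <;> omega
  | succ d ih =>
    rw [revWord, adjSwaps, List.map_append, List.prod_append, Equiv.Perm.mul_apply, ← adjSwaps,
      ← adjSwaps, adjSwaps_range'_reverse]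
    split_ifs <;> rw [ih] <;> split_ifs <;> omega

theorem IsGTPattern.levelSum_toggles_revWord (hp : IsGTPattern l r p) {k : ℕ} (hk : k ≤ r) :
    levelSum r (toggles p (revWord r)) k = levelSum r p r - levelSum r p (r - k) := by
  have hL : ∀ a ∈ revWord r, 1 ≤ a ∧ a + 1 ≤ r := fun _ => mem_revWord
  rw [(isGTPattern_toggles hp hL).levelSum_eq_sum_content, hp.content_toggles hL]
  have hterm : ∀ j ∈ range k, (content r p ∘ adjSwaps (revWord r)) (j + 1) =
      levelSum r p (r - j) - levelSum r p (r - (j + 1)) := by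
    intro j hj
    rw [mem_range] at hj
    rw [Function.comp_apply, adjSwaps_revWord, if_pos ⟨by omega, by omega⟩, content,
      show r + 1 - (j + 1) = r - j by omega, Nat.sub_sub]
  rw [sum_congr rfl hterm, sum_range_sub' (fun j => levelSum r p (r - j)), Nat.sub_zero]

/-- With `m = content r p`, reversing the content turns the weight `∑ j * m j` into
`∑ (r + 1 - j) * m j`. -/
theorem IsGTPattern.wt_ofGT_toggles_revWord_add (hp : IsGTPattern l r p) :
    wt l r (ofGT l r (toggles p (revWord r))) + wt l r (ofGT l r p) =
      (r + 1) * ∑ i ∈ Icc 1 r, l i := by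
  have hq := isGTPattern_toggles hp fun _ => mem_revWord
  have hrev : ∑ k ∈ range (r + 1), levelSum r p (r - k) = ∑ k ∈ range (r + 1), levelSum r p k :=
    sum_range_reflect (levelSum r p) (r + 1)
  zify
  rw [wt_ofGT hq, wt_ofGT hp, sum_congr rfl fun k hk => hp.levelSum_toggles_revWord
    (Nat.lt_succ_iff.mp (mem_range.mp hk)), sum_sub_distrib, hrev,
    hp.levelSum_toggles_revWord le_rfl, Nat.sub_self, levelSum_zero hp, levelSum_top hp, sum_const,
    card_range, nsmul_eq_mul]
  push_cast
  ring

theorem sum_Icc_reflect {M : Type*} [AddCommMonoid M] (f : ℕ → M) (k : ℕ) :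
    ∑ i ∈ Icc 1 k, f (k + 1 - i) = ∑ i ∈ Icc 1 k, f i := by
  rw [← Ico_add_one_right_eq_Icc, sum_Ico_reflect f 1 (n := k + 1) (by omega)]
  congr 2
  omega

theorem lcomp_le (i : ℕ) : lcomp l r c i ≤ c := by
  unfold lcomp
  split_ifs <;> omega

theorem lcomp_eq_zero {i : ℕ} (hi : r < i) : lcomp l r c i = 0 := if_neg (by omega)

theorem antitone_lcomp (hl : Antitone l) : Antitone (lcomp l r c) := by
  refine antitone_nat_of_succ_le fun i => ?_
  unfold lcomp
  split_ifs with h h'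
  · have := hl (show r + 1 - (i + 1) ≤ r + 1 - i by omega)
    omega
  · omega
  · exact Nat.zero_le _
  · exact le_rfl

theorem lcomp_lcomp (hlr : ∀ i, r < i → l i = 0) (hc : ∀ i, l i ≤ c) {i : ℕ} (hi : 1 ≤ i) :
    lcomp (lcomp l r c) r c i = l i := by
  by_cases hir : i ≤ r
  · rw [lcomp, if_pos hir, lcomp, if_pos (by omega), show r + 1 - (r + 1 - i) = i by omega]
    have := hc i
    omega
  · rw [lcomp_eq_zero (by omega), hlr i (by omega)]

theorem sum_lcomp_add (hc : ∀ i, l i ≤ c) :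
    ∑ i ∈ Icc 1 r, lcomp l r c i + ∑ i ∈ Icc 1 r, l i = r * c := by
  rw [← sum_Icc_reflect l r, ← sum_add_distrib, sum_congr rfl fun i hi => ?_, sum_const,
    Nat.card_Icc, Nat.add_sub_cancel, smul_eq_mul]
  rw [lcomp, if_pos (mem_Icc.mp hi).2]
  have := hc (r + 1 - i)
  omega

def rotate (c r : ℕ) (p : ℕ → ℕ → ℕ) (k i : ℕ) : ℕ :=
  if 1 ≤ k ∧ k ≤ r ∧ 1 ≤ i ∧ i ≤ k then c - p k (k + 1 - i) else 0

theorem isGTPattern_rotate (hp : IsGTPattern l r p) :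
    IsGTPattern (lcomp l r c) r (rotate c r p) where
  top i hi := by
    by_cases hir : i ≤ r
    · rw [rotate, if_pos ⟨by omega, le_rfl, hi, hir⟩, lcomp, if_pos hir, hp.top _ (by omega)]
    · rw [rotate, if_neg (by omega), lcomp_eq_zero (by omega)]
  le_succ k i hk hkr := by
    unfold rotate
    split_ifs with h h'
    · have := hp.succ_succ_le k (k + 1 - i) hk hkr (by omega)
      rw [show k + 1 + 1 - i = k + 1 - i + 1 by omega]
      omega
    · omega
    · exact Nat.zero_le _
    · exact le_rfl
  succ_succ_le k i hk hkr hi := by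
    unfold rotate
    split_ifs with h h'
    · have := hp.le_succ k (k + 1 - i) hk hkr
      rw [show k + 1 + 1 - (i + 1) = k + 1 - i by omega]
      omega
    · omega
    · exact Nat.zero_le _
    · exact le_rfl
  eq_zero k i h := if_neg h

theorem IsGTPattern.rotate_rotate (hp : IsGTPattern l r p) (hc : ∀ i, l i ≤ c) :
    rotate c r (rotate c r p) = p := by
  funext k i
  by_cases hki : 1 ≤ k ∧ k ≤ r ∧ 1 ≤ i ∧ i ≤ k
  · obtain ⟨hk, hkr, hi, hik⟩ := hki
    rw [rotate, if_pos ⟨hk, hkr, hi, hik⟩, rotate, if_pos ⟨hk, hkr, by omega, by omega⟩,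
      show k + 1 - (k + 1 - i) = i by omega]
    have := (hp.le_top hk hkr hi).trans (hc i)
    omega
  · rw [rotate, if_neg hki, hp.eq_zero k i hki]

theorem IsGTPattern.levelSum_rotate (hp : IsGTPattern l r p) (hc : ∀ i, l i ≤ c) {k : ℕ}
    (hk : k ≤ r) : levelSum r (rotate c r p) k = k * c - levelSum r p k := by
  have hkc : (k : ℤ) * c = ∑ i ∈ Icc 1 k, (c : ℤ) := by simp
  rw [(isGTPattern_rotate hp).levelSum_eq_sum_Icc hk, hp.levelSum_eq_sum_Icc hk,
    ← sum_Icc_reflect (fun i => (p k i : ℤ)), hkc, ← sum_sub_distrib]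
  refine sum_congr rfl fun i hi => ?_
  rw [mem_Icc] at hi
  have := (hp.le_top (by omega) hk (by omega : 1 ≤ k + 1 - i)).trans (hc _)
  rw [rotate, if_pos ⟨by omega, hk, hi⟩]
  omega

/-- With `m = content r p`, complementing the levels in `c` turns the weight `∑ j * m j` into
`∑ j * (c - m j)`. -/
theorem IsGTPattern.wt_ofGT_rotate_add (hp : IsGTPattern l r p) (hc : ∀ i, l i ≤ c) :
    wt (lcomp l r c) r (ofGT (lcomp l r c) r (rotate c r p)) + wt l r (ofGT l r p) =
      c * ∑ k ∈ range (r + 1), k := by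
  have hgauss := sum_range_id_mul_two (r + 1)
  have hlcomp := sum_lcomp_add (r := r) hc
  zify at hgauss hlcomp ⊢
  rw [wt_ofGT (isGTPattern_rotate hp), wt_ofGT hp,
    sum_congr rfl fun k hk => hp.levelSum_rotate hc (Nat.lt_succ_iff.mp (mem_range.mp hk)),
    levelSum_top (isGTPattern_rotate hp), levelSum_top hp, sum_sub_distrib, ← sum_mul]
  push_cast at hgauss hlcomp ⊢
  simp only [Nat.succ_eq_add_one] at hgauss ⊢
  linear_combination (↑r + 1) * hlcomp - (c : ℤ) * hgauss

def complementTableau (l : ℕ → ℕ) (r c : ℕ) (t : ℕ → ℕ → ℕ) : ℕ → ℕ → ℕ :=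
  ofGT (lcomp l r c) r (rotate c r (toggles (toGT l r t) (revWord r)))

theorem bijOn_complementTableau (hl : Antitone l) (hlr : ∀ i, r < i → l i = 0)
    (hc : ∀ i, l i ≤ c) :
    Set.BijOn (complementTableau l r c) {t | IsSSYT l r t} {u | IsSSYT (lcomp l r c) r u} := by
  have hL : ∀ a ∈ revWord r, 1 ≤ a ∧ a + 1 ≤ r := fun _ => mem_revWord
  have hL' : ∀ a ∈ (revWord r).reverse, 1 ≤ a ∧ a + 1 ≤ r :=
    fun a ha => hL a (List.mem_reverse.mp ha)
  have hl' := antitone_lcomp (r := r) (c := c) hl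
  have hlr' : ∀ i, r < i → lcomp l r c i = 0 := fun _ => lcomp_eq_zero
  have hlcomp : ∀ i, 1 ≤ i → lcomp (lcomp l r c) r c i = l i := fun _ => lcomp_lcomp hlr hc
  let inv : (ℕ → ℕ → ℕ) → ℕ → ℕ → ℕ := fun u =>
    ofGT l r (toggles (rotate c r (toGT (lcomp l r c) r u)) (revWord r).reverse)
  have hinvGT : ∀ u, IsSSYT (lcomp l r c) r u →
      IsGTPattern l r (rotate c r (toGT (lcomp l r c) r u)) := fun u hu =>
    (isGTPattern_rotate (isGTPattern_toGT hu hl' hlr')).congr_top hlcomp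
  refine Set.InvOn.bijOn (f' := inv) ⟨fun t ht => ?_, fun u hu => ?_⟩ (fun t ht => ?_)
    (fun u hu => ?_)
  · have hp := isGTPattern_toggles (isGTPattern_toGT ht hl hlr) hL
    simp only [inv, complementTableau]
    rw [toGT_ofGT (isGTPattern_rotate hp), hp.rotate_rotate hc,
      (isGTPattern_toGT ht hl hlr).toggles_toggles_reverse hL, ofGT_toGT ht hl]
  · have hp := isGTPattern_toggles (hinvGT u hu) hL'
    have hback := (hinvGT u hu).toggles_toggles_reverse hL'
    rw [List.reverse_reverse] at hback
    simp only [inv, complementTableau]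
    rw [toGT_ofGT hp, hback, (isGTPattern_toGT hu hl' hlr').rotate_rotate lcomp_le,
      ofGT_toGT hu hl']
  · exact isSSYT_ofGT
      (isGTPattern_rotate (isGTPattern_toggles (isGTPattern_toGT ht hl hlr) hL)) hl'
  · exact isSSYT_ofGT (isGTPattern_toggles (hinvGT u hu) hL') hl

theorem wt_complementTableau {t : ℕ → ℕ → ℕ} (ht : IsSSYT l r t) (hl : Antitone l)
    (hlr : ∀ i, r < i → l i = 0) (hc : ∀ i, l i ≤ c) :
    wt (lcomp l r c) r (complementTableau l r c t) + (r + 1) * ∑ i ∈ Icc 1 r, l i =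
      c * ∑ k ∈ range (r + 1), k + wt l r t := by
  have hp := isGTPattern_toGT ht hl hlr
  have hsymm := hp.wt_ofGT_toggles_revWord_add
  have hrot := (isGTPattern_toggles hp fun _ => mem_revWord).wt_ofGT_rotate_add hc
  rw [ofGT_toGT ht hl] at hsymm
  rw [complementTableau]
  omega

theorem mul_sub_ediv_two_eq (r c n : ℕ) :
    ((r : ℤ) + 1) * ((r : ℤ) * c - 2 * n) / 2 =
      ((c * ∑ k ∈ range (r + 1), k : ℕ) : ℤ) - (r + 1) * n := by
  have hgauss := sum_range_id_mul_two (r + 1)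
  zify at hgauss
  rw [Nat.add_sub_cancel] at hgauss
  have htwice : ((r : ℤ) + 1) * ((r : ℤ) * c - 2 * n) =
      2 * (((c * ∑ k ∈ range (r + 1), k : ℕ) : ℤ) - (r + 1) * n) := by
    push_cast
    linear_combination (-(c : ℤ)) * hgauss
  rw [htwice, Int.mul_ediv_cancel_left _ two_ne_zero]

end SchurComplement

theorem schur_complement_specialization_general (r c n : ℕ)
    (l : ℕ → ℕ)
    (hA : ∀ i, l (i + 1) ≤ l i) (hr : ∀ i, r < i → l i = 0) (hc : ∀ i, l i ≤ c)
    (hn : ∑ i ∈ Finset.Icc 1 r, l i = n)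
    (q : ℂ) (hq : q ≠ 0) :
    (∑ᶠ u ∈ {u : ℕ → ℕ → ℕ | IsSSYT (lcomp l r c) r u}, q ^ wt (lcomp l r c) r u) =
      q ^ ((((r : ℤ) + 1) * ((r : ℤ) * c - 2 * n)) / 2) *
        ∑ᶠ t ∈ {t : ℕ → ℕ → ℕ | IsSSYT l r t}, q ^ wt l r t := by
  open SchurComplement in
  have hl : Antitone l := antitone_nat_of_succ_le hA
  rw [mul_finsum_mem, eq_comm]
  refine finsum_mem_eq_of_bijOn _ (bijOn_complementTableau hl hr hc) fun t ht => ?_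
  have hwt := wt_complementTableau (c := c) ht hl hr hc
  rw [← zpow_natCast, ← zpow_natCast, ← zpow_add₀ hq, mul_sub_ediv_two_eq]
  congr 1
  subst hn
  push_cast at hwt ⊢
  linarith

/-- **Principal specialization of the complementary Schur polynomial.** For a
partition `λ` of `n` inside the `r × c` rectangle,
`s_{λ°}(q, q², …, q^r) = q^{(r+1)(rc/2 - n)} · s_λ(q, q², …, q^r)`, where the
exponent is the (always even) integer `(r+1)(rc - 2n)/2`. -/
theorem schur_complement_specialization (r c n : ℕ) (hr0 : 0 < r) (hc0 : 0 < c)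
    (l : ℕ → ℕ)
    (hA : ∀ i, l (i + 1) ≤ l i) (hr : ∀ i, r < i → l i = 0) (hc : ∀ i, l i ≤ c)
    (hn : ∑ i ∈ Finset.Icc 1 r, l i = n)
    (q : ℂ) (hq : q ≠ 0) :
    (∑ᶠ u ∈ {u : ℕ → ℕ → ℕ | IsSSYT (lcomp l r c) r u}, q ^ wt (lcomp l r c) r u) =
      q ^ ((((r : ℤ) + 1) * ((r : ℤ) * c - 2 * n)) / 2) *
        ∑ᶠ t ∈ {t : ℕ → ℕ → ℕ | IsSSYT l r t}, q ^ wt l r t :=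
  schur_complement_specialization_general r c n l hA hr hc hn q hq
end

section
/- Let λ be a partition with ℓ(λ) ≤ r and λ₁ ≤ c, D the r × c rectangle. Then the following identity of rational functions in q holds: ∏_{(i,j) ∈ D \ [λ]} (q^{d_{(i,j)}(λ)} − 1)/(q^{h_{(i,j)}(λ)} − 1) = ∏_{(i,j) ∈ [λ]} (q^{d_{(i,j)}(λ)} − 1)/(q^{h_{(i,j)}(λ)} − 1), where hooks of boxes in [λ] are standard hooks, hooks of boxes outside are complementary hooks, and distances are as defined. -/
/-! Put `β i = λ i + (r - i)`. In row `i` of `[λ]`, the hook lengths together with the gaps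
`β i - β i'` (`i < i' ≤ r`) are exactly `1, …, β i`, and so are the gaps `i' - i` together with
the southwest distances. Multiplying over the rows, `∏_{[λ]} [h] · Δ(β) = Δ(0) · ∏_{[λ]} [d]`,
where `[k] = q^k - 1` and `Δ(β) = ∏_{i < i'} [β i - β i']`. Rotating `D \ [λ]` by 180° gives the
diagram of the complementary partition, whose hooks and southwest distances are the complementary
hooks and northeast distances of `λ`, and whose `Δ(β)` equals that of `λ`. Hence both sides of the
identity equal `Δ(β) / Δ(0)`. -/
open Finset

theorem prod_mul_prod_eq_prod_Icc_of_partition {ι κ M : Type*} [CommMonoid M] (g : ℕ → M)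
    {s : Finset ι} {t : Finset κ} {f : ι → ℕ} {h : κ → ℕ} {n : ℕ}
    (hf : Set.InjOn f s) (hh : Set.InjOn h t)
    (hfn : ∀ x ∈ s, f x ∈ Icc 1 n) (hhn : ∀ y ∈ t, h y ∈ Icc 1 n)
    (hfh : ∀ x ∈ s, ∀ y ∈ t, f x ≠ h y) (hcard : #s + #t = n) :
    (∏ x ∈ s, g (f x)) * ∏ y ∈ t, g (h y) = ∏ k ∈ Icc 1 n, g k := by
  classical
  have hdisj : Disjoint (s.image f) (t.image h) := by
    simp only [disjoint_left, mem_image]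
    rintro _ ⟨x, hx, rfl⟩ ⟨y, hy, hxy⟩
    exact hfh x hx y hy hxy.symm
  have hunion : s.image f ∪ t.image h = Icc 1 n := by
    refine eq_of_subset_of_card_le (union_subset ?_ ?_) ?_
    · simpa only [image_subset_iff] using hfn
    · simpa only [image_subset_iff] using hhn
    rw [card_union_of_disjoint hdisj, card_image_of_injOn hf, card_image_of_injOn hh,
      Nat.card_Icc, hcard, Nat.add_sub_cancel]
  rw [← prod_image hf, ← prod_image hh, ← prod_union hdisj, hunion]

def leg (l : ℕ → ℕ) (r i j : ℕ) : ℕ := #{i' ∈ Icc (i + 1) r | j ≤ l i'}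

def betaNum (l : ℕ → ℕ) (r i : ℕ) : ℕ := l i + (r - i)

section Row

variable {l : ℕ → ℕ} {r i : ℕ}

theorem hin_eq_leg (j : ℕ) : hin l r i j = 1 + (l i - j) + leg l r i j := rfl

theorem leg_le (j : ℕ) : leg l r i j ≤ r - i :=
  (card_filter_le _ _).trans (by simp)

theorem leg_antitone : Antitone (leg l r i) := fun _ _ huv =>
  card_le_card fun _ hx => by
    simp only [mem_filter] at hx ⊢
    exact ⟨hx.1, huv.trans hx.2⟩

theorem sub_le_leg (hl : Antitone l) {i' j : ℕ} (hi' : i' ≤ r) (hj : j ≤ l i') :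
    i' - i ≤ leg l r i j := by
  have hsub : Icc (i + 1) i' ⊆ {x ∈ Icc (i + 1) r | j ≤ l x} := fun x hx => by
    simp only [mem_Icc] at hx
    simp only [mem_filter, mem_Icc]
    exact ⟨⟨hx.1, hx.2.trans hi'⟩, hj.trans (hl hx.2)⟩
  simpa [leg] using card_le_card hsub

theorem leg_lt_sub (hl : Antitone l) {i' j : ℕ} (hii' : i < i') (hj : l i' < j) :
    leg l r i j < i' - i := by
  have hsub : {x ∈ Icc (i + 1) r | j ≤ l x} ⊆ Icc (i + 1) (i' - 1) := fun x hx => by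
    simp only [mem_filter, mem_Icc] at hx
    have : x < i' := lt_of_not_ge fun h => (hj.trans_le hx.2).not_ge (hl h)
    simp only [mem_Icc]
    omega
  have := card_le_card hsub
  simp only [Nat.card_Icc] at this
  exact this.trans_lt (by omega)

theorem hin_strictAntiOn_s15 : StrictAntiOn (hin l r i) (Set.Iic (l i)) := fun u _ v hv huv => by
  have := leg_antitone (l := l) (r := r) (i := i) huv.le
  simp only [Set.mem_Iic] at hv
  simp only [hin_eq_leg]
  omega

theorem betaNum_strictAntiOn (hl : Antitone l) : StrictAntiOn (betaNum l r) (Set.Iic r) :=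
  fun u _ v hv huv => by
    have := hl huv.le
    simp only [Set.mem_Iic] at hv
    unfold betaNum
    omega

theorem hin_ne_betaNum_sub (hl : Antitone l) {i' j : ℕ} (hii' : i < i') (hi' : i' ≤ r)
    (hj : j ≤ l i) : hin l r i j ≠ betaNum l r i - betaNum l r i' := by
  have := hl hii'.le
  rw [hin_eq_leg]
  unfold betaNum
  -- the hook is longer than the gap if row `i'` reaches column `j`, and shorter otherwise
  rcases le_or_gt j (l i') with hj' | hj'
  · have := sub_le_leg (i := i) hl hi' hj'
    omega
  · have := leg_lt_sub (r := r) hl hii' hj'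
    omega

theorem prod_row_hin_mul_prod_betaNum_sub {M : Type*} [CommMonoid M] (g : ℕ → M)
    (hl : Antitone l) :
    (∏ j ∈ Icc 1 (l i), g (hin l r i j)) *
        ∏ i' ∈ Icc (i + 1) r, g (betaNum l r i - betaNum l r i') =
      ∏ k ∈ Icc 1 (betaNum l r i), g k := by
  have hβ : ∀ i' ∈ Icc (i + 1) r, betaNum l r i' < betaNum l r i := fun i' hi' => by
    rw [mem_Icc] at hi'
    exact betaNum_strictAntiOn hl (show i ≤ r by omega) hi'.2 (by omega)
  refine prod_mul_prod_eq_prod_Icc_of_partition g ?_ ?_ ?_ ?_ ?_ ?_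
  · exact hin_strictAntiOn_s15.injOn.mono fun j hj => (mem_Icc.1 hj).2
  · intro u hu v hv huv
    have := hβ u hu
    have := hβ v hv
    exact (betaNum_strictAntiOn hl).injOn (mem_Icc.1 hu).2 (mem_Icc.1 hv).2
      (by simp only at huv; omega)
  · intro j hj
    have := leg_le (l := l) (r := r) (i := i) j
    simp only [mem_Icc] at hj ⊢
    rw [hin_eq_leg]; unfold betaNum; omega
  · intro i' hi'
    have := hβ i' hi'
    simp only [mem_Icc] at hi' ⊢
    omega
  · intro j hj i' hi'
    simp only [mem_Icc] at hj hi'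
    exact hin_ne_betaNum_sub hl (by omega) hi'.2 hj.2
  · simp only [Nat.card_Icc, betaNum]; omega

theorem prod_row_sub_mul_prod_dIn {M : Type*} [CommMonoid M] (g : ℕ → M) :
    (∏ i' ∈ Icc (i + 1) r, g (i' - i)) * ∏ j ∈ Icc 1 (l i), g (dIn r i j) =
      ∏ k ∈ Icc 1 (betaNum l r i), g k := by
  refine prod_mul_prod_eq_prod_Icc_of_partition g ?_ ?_ ?_ ?_ ?_ ?_
  · intro u hu v hv huv
    simp only [coe_Icc, Set.mem_Icc] at hu hv huv
    omega
  · intro u hu v hv huv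
    simp only [coe_Icc, Set.mem_Icc, dIn] at hu hv huv
    omega
  · intro i' hi'
    simp only [mem_Icc, betaNum] at hi' ⊢
    omega
  · intro j hj
    simp only [mem_Icc, betaNum, dIn] at hj ⊢
    omega
  · intro i' hi' j hj
    simp only [mem_Icc, dIn] at hi' hj ⊢
    omega
  · simp only [Nat.card_Icc, betaNum]; omega

end Row

def ascPairs (r : ℕ) : Finset (ℕ × ℕ) := {p ∈ Icc 1 r ×ˢ Icc 1 r | p.1 < p.2}

theorem prod_cells {M : Type*} [CommMonoid M] {l : ℕ → ℕ} {r c : ℕ} (hc : ∀ i, l i ≤ c)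
    (f : ℕ × ℕ → M) : ∏ p ∈ cells l r c, f p = ∏ i ∈ Icc 1 r, ∏ j ∈ Icc 1 (l i), f (i, j) := by
  rw [cells, rect, prod_filter, prod_product]
  refine prod_congr rfl fun i _ => ?_
  rw [← prod_filter]
  congr 1
  ext j
  simp only [mem_filter, mem_Icc]
  have := hc i
  omega

theorem prod_ascPairs {M : Type*} [CommMonoid M] (r : ℕ) (f : ℕ × ℕ → M) :
    ∏ p ∈ ascPairs r, f p = ∏ i ∈ Icc 1 r, ∏ i' ∈ Icc (i + 1) r, f (i, i') := by
  rw [ascPairs, prod_filter, prod_product]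
  refine prod_congr rfl fun i _ => ?_
  rw [← prod_filter]
  congr 1
  ext i'
  simp only [mem_filter, mem_Icc]
  omega

theorem prod_cells_hin_mul_prod_ascPairs {M : Type*} [CommMonoid M] (g : ℕ → M) {l : ℕ → ℕ}
    {r c : ℕ} (hl : Antitone l) (hc : ∀ i, l i ≤ c) :
    (∏ p ∈ cells l r c, g (hin l r p.1 p.2)) *
        ∏ p ∈ ascPairs r, g (betaNum l r p.1 - betaNum l r p.2) =
      (∏ p ∈ ascPairs r, g (p.2 - p.1)) * ∏ p ∈ cells l r c, g (dIn r p.1 p.2) := by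
  simp only [prod_cells hc, prod_ascPairs, ← prod_mul_distrib]
  exact prod_congr rfl fun i _ => by
    rw [prod_row_hin_mul_prod_betaNum_sub g hl, prod_row_sub_mul_prod_dIn g]

/-- The partition whose diagram is `D \ [λ]` rotated by 180°. -/
def rectCompl (l : ℕ → ℕ) (r c k : ℕ) : ℕ := c - l (r + 1 - k)

section RectCompl

variable {l : ℕ → ℕ} {r c : ℕ}

theorem rectCompl_antitone (hl : Antitone l) : Antitone (rectCompl l r c) := fun u v huv => by
  have := hl (show r + 1 - v ≤ r + 1 - u by omega)
  unfold rectCompl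
  omega

theorem rectCompl_le (k : ℕ) : rectCompl l r c k ≤ c := Nat.sub_le _ _

theorem rectCompl_rev {k : ℕ} (hk : k ≤ r + 1) : rectCompl l r c (r + 1 - k) = c - l k := by
  rw [rectCompl, Nat.sub_sub_self hk]

theorem prod_ocells_eq_prod_cells_rectCompl {M : Type*} [CommMonoid M] (hc : ∀ i, l i ≤ c)
    (f : ℕ × ℕ → M) :
    ∏ p ∈ ocells l r c, f p =
      ∏ p ∈ cells (rectCompl l r c) r c, f (r + 1 - p.1, c + 1 - p.2) := by
  refine prod_nbij' (fun p => (r + 1 - p.1, c + 1 - p.2)) (fun p => (r + 1 - p.1, c + 1 - p.2))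
    ?_ ?_ ?_ ?_ ?_
  · rintro ⟨i, j⟩ hp
    simp only [ocells, cells, rect, mem_filter, mem_product, mem_Icc] at hp ⊢
    rw [rectCompl_rev (by omega)]
    have := hc i
    omega
  · rintro ⟨i, j⟩ hp
    simp only [ocells, cells, rect, mem_filter, mem_product, mem_Icc] at hp ⊢
    rw [rectCompl] at hp
    have := hc (r + 1 - i)
    omega
  · rintro ⟨i, j⟩ hp
    simp only [ocells, rect, mem_filter, mem_product, mem_Icc] at hp
    ext <;> dsimp only <;> omega
  · rintro ⟨i, j⟩ hp
    simp only [cells, rect, mem_filter, mem_product, mem_Icc] at hp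
    ext <;> dsimp only <;> omega
  · rintro ⟨i, j⟩ hp
    simp only [ocells, rect, mem_filter, mem_product, mem_Icc] at hp
    congr <;> omega

theorem hout_rev (hc : ∀ i, l i ≤ c) {i j : ℕ} (hj : j ≤ rectCompl l r c i) :
    hout l (r + 1 - i) (c + 1 - j) = hin (rectCompl l r c) r i j := by
  have hjc := hj.trans (rectCompl_le i)
  have hrow : #{j' ∈ Icc 1 (c + 1 - j - 1) | l (r + 1 - i) < j'} = rectCompl l r c i - j := by
    rw [show {j' ∈ Icc 1 (c + 1 - j - 1) | l (r + 1 - i) < j'} =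
        Icc (l (r + 1 - i) + 1) (c - j) by ext; simp only [mem_filter, mem_Icc]; omega,
      Nat.card_Icc, rectCompl]
    omega
  have hcol : #{i' ∈ Icc 1 (r + 1 - i - 1) | l i' < c + 1 - j} = leg (rectCompl l r c) r i j := by
    refine card_nbij' (fun i' => r + 1 - i') (fun i' => r + 1 - i') ?_ ?_ ?_ ?_
    · intro i' hi'
      simp only [mem_coe, mem_filter, mem_Icc] at hi' ⊢
      rw [rectCompl_rev (by omega)]
      have := hc i'
      omega
    · intro i' hi'
      simp only [mem_coe, mem_filter, mem_Icc] at hi' ⊢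
      rw [rectCompl] at hi'
      have := hc (r + 1 - i')
      omega
    · intro i' hi'
      simp only [mem_coe, mem_filter, mem_Icc] at hi'
      dsimp only
      omega
    · intro i' hi'
      simp only [mem_coe, mem_filter, mem_Icc] at hi'
      dsimp only
      omega
  rw [hout, hrow, hcol, hin_eq_leg]

theorem dOut_rev {i j : ℕ} (hj : j ≤ c) : dOut c (r + 1 - i) (c + 1 - j) = dIn r i j := by
  unfold dOut dIn
  omega

theorem betaNum_rectCompl_sub (hl : Antitone l) (hc : ∀ i, l i ≤ c) {i i' : ℕ} (hi : 1 ≤ i)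
    (hii' : i < i') (hi' : i' ≤ r) :
    betaNum (rectCompl l r c) r i - betaNum (rectCompl l r c) r i' =
      betaNum l r (r + 1 - i') - betaNum l r (r + 1 - i) := by
  have := hl (show r + 1 - i' ≤ r + 1 - i by omega)
  have := hc (r + 1 - i)
  have := hc (r + 1 - i')
  unfold betaNum rectCompl
  omega

theorem prod_ascPairs_betaNum_rectCompl {M : Type*} [CommMonoid M] (g : ℕ → M) (hl : Antitone l)
    (hc : ∀ i, l i ≤ c) :
    ∏ p ∈ ascPairs r, g (betaNum (rectCompl l r c) r p.1 - betaNum (rectCompl l r c) r p.2) =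
      ∏ p ∈ ascPairs r, g (betaNum l r p.1 - betaNum l r p.2) := by
  refine prod_nbij' (fun p => (r + 1 - p.2, r + 1 - p.1)) (fun p => (r + 1 - p.2, r + 1 - p.1))
    ?_ ?_ ?_ ?_ ?_
  all_goals rintro ⟨i, i'⟩ hp
  all_goals simp only [ascPairs, mem_filter, mem_product, mem_Icc] at hp ⊢
  · omega
  · omega
  · ext <;> dsimp only <;> omega
  · ext <;> dsimp only <;> omega
  · rw [betaNum_rectCompl_sub hl hc hp.1.1.1 hp.2 hp.1.2.2]

theorem prod_ocells_hout_mul_prod_ascPairs {M : Type*} [CommMonoid M] (g : ℕ → M)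
    (hl : Antitone l) (hc : ∀ i, l i ≤ c) :
    (∏ p ∈ ocells l r c, g (hout l p.1 p.2)) *
        ∏ p ∈ ascPairs r, g (betaNum l r p.1 - betaNum l r p.2) =
      (∏ p ∈ ascPairs r, g (p.2 - p.1)) * ∏ p ∈ ocells l r c, g (dOut c p.1 p.2) := by
  have hrot := prod_cells_hin_mul_prod_ascPairs (r := r) g
    (rectCompl_antitone (r := r) (c := c) hl) rectCompl_le
  rw [prod_ascPairs_betaNum_rectCompl g hl hc] at hrot
  rw [prod_ocells_eq_prod_cells_rectCompl hc, prod_ocells_eq_prod_cells_rectCompl hc]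
  convert hrot using 2
  · exact prod_congr rfl fun p hp => by rw [hout_rev hc (mem_filter.1 hp).2]
  · refine prod_congr rfl fun p hp => ?_
    simp only [cells, rect, mem_filter, mem_product, mem_Icc] at hp
    rw [dOut_rev hp.1.2.2]

end RectCompl

theorem hook_distance_product_identity_general (r c : ℕ)
    (l : ℕ → ℕ)
    (hA : ∀ i, l (i + 1) ≤ l i) (hc : ∀ i, l i ≤ c)
    (q : ℂ) (hq : ∀ m : ℕ, 0 < m → q ^ m ≠ 1) :
    ∏ p ∈ ocells l r c,
        (q ^ dOut c p.1 p.2 - 1) / (q ^ hout l p.1 p.2 - 1) =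
      ∏ p ∈ cells l r c,
        (q ^ dIn r p.1 p.2 - 1) / (q ^ hin l r p.1 p.2 - 1) := by
  have hl : Antitone l := antitone_nat_of_succ_le hA
  set g : ℕ → ℂ := fun k => q ^ k - 1
  have hg : ∀ k, 0 < k → g k ≠ 0 := fun k hk => sub_ne_zero_of_ne (hq k hk)
  set V := ∏ p ∈ ascPairs r, g (betaNum l r p.1 - betaNum l r p.2)
  set V₀ := ∏ p ∈ ascPairs r, g (p.2 - p.1)
  have hV₀ : V₀ ≠ 0 := prod_ne_zero_iff.2 fun p hp => hg _ <| by
    simp only [ascPairs, mem_filter] at hp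
    omega
  have hratio {H D : ℂ} (hH : H ≠ 0) (h : H * V = V₀ * D) : D / H = V / V₀ := by
    rw [div_eq_div_iff hH hV₀]
    linear_combination -h
  rw [prod_div_distrib, prod_div_distrib,
    hratio (prod_ne_zero_iff.2 fun p _ => hg _ (by unfold hout; omega))
      (prod_ocells_hout_mul_prod_ascPairs g hl hc),
    hratio (prod_ne_zero_iff.2 fun p _ => hg _ (by unfold hin; omega))
      (prod_cells_hin_mul_prod_ascPairs g hl hc)]

/-- **The rational-function identity.** For `λ` inside the `r × c` rectangle
`D`, and any `q` that is not a root of unity,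
`∏_{(i,j) ∈ D \ [λ]} (q^{d_{(i,j)}} - 1)/(q^{h_{(i,j)}} - 1)
  = ∏_{(i,j) ∈ [λ]} (q^{d_{(i,j)}} - 1)/(q^{h_{(i,j)}} - 1)`,
where boxes inside `[λ]` carry standard hooks and southwest distances, and
boxes outside carry complementary hooks and northeast distances. -/
theorem hook_distance_product_identity (r c : ℕ) (hr0 : 0 < r) (hc0 : 0 < c)
    (l : ℕ → ℕ)
    (hA : ∀ i, l (i + 1) ≤ l i) (hr : ∀ i, r < i → l i = 0) (hc : ∀ i, l i ≤ c)
    (q : ℂ) (hq : ∀ m : ℕ, 0 < m → q ^ m ≠ 1) :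
    ∏ p ∈ ocells l r c,
        (q ^ dOut c p.1 p.2 - 1) / (q ^ hout l p.1 p.2 - 1) =
      ∏ p ∈ cells l r c,
        (q ^ dIn r p.1 p.2 - 1) / (q ^ hin l r p.1 p.2 - 1) :=
  hook_distance_product_identity_general r c l hA hc q hq
end

section
/- Main theorem: Let λ be a partition with at most r rows and largest part at most c, and let D be the r × c rectangle of boxes. Then the multiset {h_{(i,j)}(λ) : (i,j) ∈ [λ]} ∪ {d_{(i,j)}(λ) : (i,j) ∈ D \ [λ]} equals the multiset {d_{(i,j)}(λ) : (i,j) ∈ [λ]} ∪ {h_{(i,j)}(λ) : (i,j) ∈ D \ [λ]}. -/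
open Finset

theorem Finset.val_map_eq_sum_singleton {α β : Type*} (s : Finset α) (g : α → β) :
    s.val.map g = ∑ x ∈ s, ({g x} : Multiset β) := by
  rw [sum_eq_multiset_sum, ← Multiset.sum_map_singleton (s.val.map g), Multiset.map_map]
  rfl

theorem val_Icc_one_add (a b : ℕ) :
    (Icc 1 (a + b)).val = (Icc 1 a).val + (Icc (a + 1) (a + b)).val := by
  simp only [← Ico_add_one_right_eq_Icc]
  exact (Multiset.Ico_add_Ico_eq_Ico (by omega) (by omega)).symm

theorem card_filter_lt_Icc_one (b n : ℕ) : #{x ∈ Icc 1 n | b < x} = n - b := by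
  rw [show {x ∈ Icc 1 n | b < x} = Icc (b + 1) n by ext; simp only [mem_filter, mem_Icc]; omega,
    Nat.card_Icc]
  omega

theorem image_Icc_reflect (a b : ℕ) : (Icc 1 (b - a)).image (b + 1 - ·) = Icc (a + 1) b := by
  ext x
  simp only [mem_image, mem_Icc]
  constructor
  · rintro ⟨y, hy, rfl⟩
    omega
  · intro hx
    exact ⟨b + 1 - x, by omega, by omega⟩

theorem injOn_reflect_Icc (a b : ℕ) : Set.InjOn (b + 1 - ·) (Icc 1 (b - a) : Set ℕ) := by
  intro x hx y hy h
  simp only [coe_Icc, Set.mem_Icc] at hx hy h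
  omega

theorem map_Icc_reflect {α : Type*} (f : ℕ → α) (a b : ℕ) :
    (Icc (a + 1) b).val.map f = (Icc 1 (b - a)).val.map (fun k => f (b + 1 - k)) := by
  rw [← image_Icc_reflect, image_val_of_injOn (injOn_reflect_Icc a b), Multiset.map_map]
  rfl

theorem card_filter_Icc_reflect (p : ℕ → Prop) [DecidablePred p] (a b : ℕ) :
    #{x ∈ Icc (a + 1) b | p x} = #{k ∈ Icc 1 (b - a) | p (b + 1 - k)} := by
  rw [← image_Icc_reflect, filter_image, card_image_of_injOn]
  exact (injOn_reflect_Icc a b).mono (filter_subset _ _)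

section HookRow

/-! A row of length `m` sitting on top of rows `s + 1, …, t` of lengths `a k`. -/

variable {a : ℕ → ℕ} {s t : ℕ}

theorem le_apply_iff_le_add_card_filter (ha : AntitoneOn a (Icc (s + 1) t)) {j k : ℕ}
    (hk : k ∈ Icc (s + 1) t) : j ≤ a k ↔ k ≤ s + #{k' ∈ Icc (s + 1) t | j ≤ a k'} := by
  rw [mem_Icc] at hk
  constructor
  · intro hj
    have hsub : Icc (s + 1) k ⊆ {k' ∈ Icc (s + 1) t | j ≤ a k'} := by
      intro k' hk'
      rw [mem_Icc] at hk'
      rw [mem_filter, mem_Icc]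
      refine ⟨⟨hk'.1, hk'.2.trans hk.2⟩, hj.trans (ha ?_ ?_ hk'.2)⟩ <;>
        simp only [coe_Icc, Set.mem_Icc] <;> omega
    have := card_le_card hsub
    rw [Nat.card_Icc] at this
    omega
  · intro hle
    by_contra! hj
    have hsub : {k' ∈ Icc (s + 1) t | j ≤ a k'} ⊆ Icc (s + 1) (k - 1) := by
      intro k' hk'
      rw [mem_filter, mem_Icc] at hk'
      rw [mem_Icc]
      by_contra! hkk
      have : a k' ≤ a k := by
        refine ha ?_ ?_ (show k ≤ k' by omega) <;> simp only [coe_Icc, Set.mem_Icc] <;> omega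
      omega
    have := card_le_card hsub
    rw [Nat.card_Icc] at this
    omega

theorem hooks_strictAntiOn (m : ℕ) :
    StrictAntiOn (fun j => 1 + (m - j) + #{k ∈ Icc (s + 1) t | j ≤ a k}) (Icc 1 m) := by
  intro j hj j' hj' hjj'
  have : #{k ∈ Icc (s + 1) t | j' ≤ a k} ≤ #{k ∈ Icc (s + 1) t | j ≤ a k} :=
    card_le_card (monotone_filter_right _ fun _ _ h => hjj'.le.trans h)
  simp only [coe_Icc, Set.mem_Icc] at hj hj'
  dsimp only
  omega

theorem gaps_strictMonoOn (ha : AntitoneOn a (Icc (s + 1) t)) (m : ℕ) :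
    StrictMonoOn (fun k => m - a k + (k - s)) (Icc (s + 1) t) := by
  intro k hk k' hk' hkk'
  have := ha hk hk' hkk'.le
  simp only [coe_Icc, Set.mem_Icc] at hk hk'
  dsimp only
  omega

theorem hooks_add_gaps_eq_Icc (ha : AntitoneOn a (Icc (s + 1) t)) (m : ℕ) :
    (Icc 1 m).val.map (fun j => 1 + (m - j) + #{k ∈ Icc (s + 1) t | j ≤ a k}) +
        (Icc (s + 1) t).val.map (fun k => m - a k + (k - s)) =
      (Icc 1 (t - s + m)).val := by
  have hlegs (j : ℕ) : #{k ∈ Icc (s + 1) t | j ≤ a k} ≤ t - s :=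
    (card_filter_le _ _).trans (by simp)
  -- The rows reaching column `j` are exactly `s + 1, …, s + #{…}`; the gap of a row before
  -- that threshold is below the hook length of `(·, j)`, the gap of a row after it above.
  have hdisj : ∀ j ∈ Icc 1 m, ∀ k ∈ Icc (s + 1) t,
      1 + (m - j) + #{k ∈ Icc (s + 1) t | j ≤ a k} ≠ m - a k + (k - s) := by
    intro j hj k hk
    have hiff := le_apply_iff_le_add_card_filter (j := j) ha hk
    rw [mem_Icc] at hj hk
    omega
  refine Multiset.eq_of_le_of_card_le ((Multiset.le_iff_subset ?_).2 ?_) ?_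
  · refine Multiset.nodup_add.2 ⟨(Icc 1 m).nodup.map_on fun j hj j' hj' h =>
        (hooks_strictAntiOn m).injOn hj hj' h,
      (Icc (s + 1) t).nodup.map_on fun k hk k' hk' h =>
        (gaps_strictMonoOn ha m).injOn hk hk' h, ?_⟩
    rw [Multiset.disjoint_left]
    simp only [Multiset.mem_map, mem_val, not_exists, not_and]
    rintro _ ⟨j, hj, rfl⟩ k hk
    exact (hdisj j hj k hk).symm
  · intro x hx
    simp only [Multiset.mem_add, Multiset.mem_map, mem_val] at hx
    rw [mem_val, mem_Icc]
    rcases hx with ⟨j, hj, rfl⟩ | ⟨k, hk, rfl⟩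
    · have := hlegs j
      rw [mem_Icc] at hj
      omega
    · rw [mem_Icc] at hk
      omega
  · simp only [Multiset.card_add, Multiset.card_map, card_val, Nat.card_Icc]
    omega

end HookRow

theorem map_filter_rect {β : Type*} {r c : ℕ} (P : ℕ → ℕ → Prop) [∀ i j, Decidable (P i j)]
    (g : ℕ → ℕ → β) :
    ((rect r c).filter (fun p => P p.1 p.2)).val.map (fun p => g p.1 p.2) =
      ∑ i ∈ Icc 1 r, ((Icc 1 c).filter (P i)).val.map (g i) := by
  simp only [rect, val_map_eq_sum_singleton, sum_filter, sum_product]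

theorem map_dIn_Icc (r i m : ℕ) :
    (Icc 1 m).val.map (dIn r i) = (Icc (r - i + 1) (r - i + m)).val :=
  calc (Icc 1 m).val.map (dIn r i) = (Icc 1 m).val.map (r - i + ·) :=
        Multiset.map_congr rfl fun j hj => by
          rw [mem_val, mem_Icc] at hj
          simp only [dIn]
          omega
    _ = _ := Multiset.map_add_left_Icc _ _ _

theorem map_dOut_Icc (c i m : ℕ) :
    (Icc (m + 1) c).val.map (dOut c i) = (Icc (i - 1 + 1) (i - 1 + (c - m))).val :=
  calc (Icc (m + 1) c).val.map (dOut c i) = (Icc 1 (c - m)).val.map (i - 1 + ·) := by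
        rw [map_Icc_reflect]
        refine Multiset.map_congr rfl fun j hj => ?_
        rw [mem_val, mem_Icc] at hj
        simp only [dOut]
        omega
    _ = _ := Multiset.map_add_left_Icc _ _ _

def lowerGaps (l : ℕ → ℕ) (r i : ℕ) : Multiset ℕ :=
  (Icc (i + 1) r).val.map (fun k => l i - l k + (k - i))

def upperGaps (l : ℕ → ℕ) (i : ℕ) : Multiset ℕ :=
  (Icc 1 (i - 1)).val.map (fun k => l k - l i + (i - k))

theorem sum_lowerGaps_eq_sum_upperGaps (l : ℕ → ℕ) (r : ℕ) :
    ∑ i ∈ Icc 1 r, lowerGaps l r i = ∑ i ∈ Icc 1 r, upperGaps l i := by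
  simp only [lowerGaps, upperGaps, val_map_eq_sum_singleton, ← Ico_add_one_right_eq_Icc]
  rw [sum_Ico_Ico_comm']
  refine sum_congr rfl fun i hi => ?_
  rw [Nat.sub_add_cancel (mem_Ico.1 hi).1]

theorem sum_Icc_one_sub_eq_sum_Icc_one_pred (r : ℕ) :
    ∑ i ∈ Icc 1 r, (Icc 1 (r - i)).val = ∑ i ∈ Icc 1 r, (Icc 1 (i - 1)).val := by
  refine sum_nbij' (r + 1 - ·) (r + 1 - ·) ?_ ?_ ?_ ?_ ?_ <;> intro i hi <;>
    simp only [mem_Icc] at hi ⊢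
  all_goals first | omega | (congr 2; omega)

section Rows

variable {l : ℕ → ℕ} {r c : ℕ}

theorem map_cells_eq_sum (hc : ∀ i, l i ≤ c) (g : ℕ → ℕ → ℕ) :
    (cells l r c).val.map (fun p => g p.1 p.2) = ∑ i ∈ Icc 1 r, (Icc 1 (l i)).val.map (g i) := by
  rw [cells, map_filter_rect (fun i j => j ≤ l i)]
  refine sum_congr rfl fun i _ => ?_
  congr 2
  ext j
  simp only [mem_filter, mem_Icc]
  have := hc i
  omega

theorem map_ocells_eq_sum (g : ℕ → ℕ → ℕ) :
    (ocells l r c).val.map (fun p => g p.1 p.2) =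
      ∑ i ∈ Icc 1 r, (Icc (l i + 1) c).val.map (g i) := by
  rw [ocells, map_filter_rect (fun i j => l i < j)]
  refine sum_congr rfl fun i _ => ?_
  congr 2
  ext j
  simp only [mem_filter, mem_Icc]
  omega

theorem map_hin_add_lowerGaps (hl : Antitone l) (i : ℕ) :
    (Icc 1 (l i)).val.map (hin l r i) + lowerGaps l r i =
      (Icc 1 (r - i)).val + (Icc 1 (l i)).val.map (dIn r i) := by
  rw [map_dIn_Icc, ← val_Icc_one_add]
  exact hooks_add_gaps_eq_Icc (hl.antitoneOn _) (l i)

theorem map_hout_add_upperGaps (hl : Antitone l) (hc : ∀ k, l k ≤ c) (i : ℕ) :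
    (Icc (l i + 1) c).val.map (hout l i) + upperGaps l i =
      (Icc 1 (i - 1)).val + (Icc (l i + 1) c).val.map (dOut c i) := by
  -- Turned upside down, row `i` of `D \ [λ]` has length `c - l i` and the rows above it
  -- become the rows `k = 1, …, i - 1` below it, of lengths `c - l (i - k)`.
  have ha : AntitoneOn (fun k => c - l (i - k)) (Icc (0 + 1) (i - 1)) :=
    fun k _ k' _ h => Nat.sub_le_sub_left (hl (Nat.sub_le_sub_left h i)) c
  have key := hooks_add_gaps_eq_Icc ha (c - l i)
  simp only [zero_add, Nat.sub_zero] at key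
  rw [val_Icc_one_add, ← map_dOut_Icc] at key
  rw [← key, upperGaps, map_Icc_reflect (hout l i)]
  congr 1
  · refine Multiset.map_congr rfl fun j hj => ?_
    rw [mem_val, mem_Icc] at hj
    have hcol := card_filter_Icc_reflect (fun x => l x < c + 1 - j) 0 (i - 1)
    rw [zero_add, Nat.sub_zero] at hcol
    have hrows : {k ∈ Icc 1 (i - 1) | l (i - 1 + 1 - k) < c + 1 - j} =
        {k ∈ Icc 1 (i - 1) | j ≤ c - l (i - k)} := by
      refine filter_congr fun k hk => ?_
      rw [mem_Icc] at hk
      rw [show i - 1 + 1 - k = i - k by omega]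
      have := hc (i - k)
      omega
    rw [hout, card_filter_lt_Icc_one, hcol, hrows]
    omega
  · have hgaps := map_Icc_reflect (fun k => l k - l i + (i - k)) 0 (i - 1)
    rw [zero_add, Nat.sub_zero] at hgaps
    rw [hgaps]
    refine Multiset.map_congr rfl fun k hk => ?_
    rw [mem_val, mem_Icc] at hk
    rw [show i - 1 + 1 - k = i - k by omega]
    have := hl (show i - k ≤ i by omega)
    have := hc (i - k)
    omega

end Rows

theorem hook_distance_main_general (r c : ℕ) (l : ℕ → ℕ)
    (hA : ∀ i, l (i + 1) ≤ l i) (hc : ∀ i, l i ≤ c) :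
    (cells l r c).val.map (fun p => hin l r p.1 p.2) +
        (ocells l r c).val.map (fun p => dOut c p.1 p.2) =
      (cells l r c).val.map (fun p => dIn r p.1 p.2) +
        (ocells l r c).val.map (fun p => hout l p.1 p.2) := by
  have hl : Antitone l := antitone_nat_of_succ_le hA
  have hIn := sum_congr rfl fun i (_ : i ∈ Icc 1 r) => map_hin_add_lowerGaps (r := r) hl i
  have hOut := sum_congr rfl fun i (_ : i ∈ Icc 1 r) => map_hout_add_upperGaps hl hc i
  simp only [sum_add_distrib, sum_lowerGaps_eq_sum_upperGaps,
    sum_Icc_one_sub_eq_sum_Icc_one_pred] at hIn hOut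
  rw [map_cells_eq_sum hc, map_cells_eq_sum hc, map_ocells_eq_sum, map_ocells_eq_sum]
  refine add_right_cancel (b := ∑ i ∈ Icc 1 r, upperGaps l i) ?_
  rw [add_right_comm, hIn, add_assoc, add_assoc, hOut, add_left_comm]

/-- **Main theorem.** For a partition `λ` inside the `r × c` rectangle `D`, the
multiset of entries of the hook/distance tableau (hook lengths on `[λ]`,
distances on `D \ [λ]`) equals the multiset of entries of the distance/hook
tableau (distances on `[λ]`, complementary hook lengths on `D \ [λ]`). -/
theorem hook_distance_main (r c : ℕ) (hr0 : 0 < r) (hc0 : 0 < c) (l : ℕ → ℕ)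
    (hA : ∀ i, l (i + 1) ≤ l i) (hr : ∀ i, r < i → l i = 0) (hc : ∀ i, l i ≤ c) :
    (cells l r c).val.map (fun p => hin l r p.1 p.2) +
        (ocells l r c).val.map (fun p => dOut c p.1 p.2) =
      (cells l r c).val.map (fun p => dIn r p.1 p.2) +
        (ocells l r c).val.map (fun p => hout l p.1 p.2) :=
  hook_distance_main_general r c l hA hc
end
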